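/- arXiv:1601.07487 — 9 statements merged into one kernel-verified Lean document; each statement's English description precedes it below -/
import Mathlib

section
/- Closure of q-holonomic functions under addition (Theorem 5.4(a)): if f, g : ℤ^r → V are q-holonomic functions, then the pointwise sum f + g : ℤ^r → V is q-holonomic. -/
open scoped BigOperators

noncomputable section

/-- The operator `M^α L^β` acting on functions `ℤ^r → V`:
`(M^α L^β f)(n) = q^(α·n) • f(n + β)`, where `q = X ∈ R = k(q) = RatFunc k`. -/
def shiftZ (k : Type) [Field k] {V : Type} [AddCommGroup V] [Module (RatFunc k) V]
    {r : ℕ} (α β : Fin r → ℕ) (f : (Fin r → ℤ) → V) : (Fin r → ℤ) → V :=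
  fun n => ((RatFunc.X : RatFunc k) ^ (∑ i, (α i : ℤ) * n i)) • f (fun i => n i + (β i : ℤ))

/-- The subspace `F_m f` spanned by the `M^α L^β f` with `|α| + |β| ≤ m`. -/
def FmZ (k : Type) [Field k] {V : Type} [AddCommGroup V] [Module (RatFunc k) V]
    {r : ℕ} (m : ℕ) (f : (Fin r → ℤ) → V) : Submodule (RatFunc k) ((Fin r → ℤ) → V) :=
  Submodule.span (RatFunc k)
    { g | ∃ α β : Fin r → ℕ, (∑ i, α i) + (∑ i, β i) ≤ m ∧ g = shiftZ k α β f }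

/-- `f : ℤ^r → V` is q-holonomic if each `F_m f` is finite dimensional over `R = k(q)`
and there is a constant `C` with `dim_R F_m f ≤ C (m+1)^r` for all `m`. -/
def IsQHolonomicZ (k : Type) [Field k] {V : Type} [AddCommGroup V] [Module (RatFunc k) V]
    {r : ℕ} (f : (Fin r → ℤ) → V) : Prop :=
  (∀ m : ℕ, FiniteDimensional (RatFunc k) (FmZ k m f)) ∧
  ∃ C : ℕ, ∀ m : ℕ, Module.finrank (RatFunc k) (FmZ k m f) ≤ C * (m + 1) ^ r

/-- Theorem 5.4(a): the sum of two q-holonomic functions `ℤ^r → V` is q-holonomic. -/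
theorem qholonomic_add (k : Type) [Field k] [CharZero k] {V : Type} [AddCommGroup V]
    [Module (RatFunc k) V] {r : ℕ} (hr : 1 ≤ r) (f g : (Fin r → ℤ) → V)
    (hf : IsQHolonomicZ k f) (hg : IsQHolonomicZ k g) :
    IsQHolonomicZ k (f + g) := by
  have hle : ∀ m : ℕ, FmZ k m (f + g) ≤ FmZ k m f ⊔ FmZ k m g := by
    intro m
    apply Submodule.span_le.2
    rintro h ⟨α, β, hαβ, rfl⟩
    have : shiftZ k α β (f + g) = shiftZ k α β f + shiftZ k α β g := by
      funext n; simp [shiftZ, smul_add]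
    rw [this]
    exact Submodule.add_mem _
      (Submodule.mem_sup_left (Submodule.subset_span ⟨α, β, hαβ, rfl⟩))
      (Submodule.mem_sup_right (Submodule.subset_span ⟨α, β, hαβ, rfl⟩))
  obtain ⟨hf1, Cf, hf2⟩ := hf
  obtain ⟨hg1, Cg, hg2⟩ := hg
  have hfd : ∀ m : ℕ, FiniteDimensional (RatFunc k) (FmZ k m (f + g)) := by
    intro m
    haveI := hf1 m; haveI := hg1 m
    haveI : FiniteDimensional (RatFunc k) ↥(FmZ k m f ⊔ FmZ k m g) :=
      Submodule.finiteDimensional_sup _ _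
    exact Submodule.finiteDimensional_of_le (hle m)
  refine ⟨hfd, Cf + Cg, fun m => ?_⟩
  haveI := hf1 m; haveI := hg1 m
  haveI : FiniteDimensional (RatFunc k) ↥(FmZ k m f ⊔ FmZ k m g) :=
    Submodule.finiteDimensional_sup _ _
  calc Module.finrank (RatFunc k) (FmZ k m (f + g))
      ≤ Module.finrank (RatFunc k) ↥(FmZ k m f ⊔ FmZ k m g) :=
        Submodule.finrank_mono (hle m)
    _ ≤ Module.finrank (RatFunc k) (FmZ k m f)
        + Module.finrank (RatFunc k) (FmZ k m g) :=
        Submodule.finrank_add_le_finrank_add_finrank _ _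
    _ ≤ Cf * (m + 1) ^ r + Cg * (m + 1) ^ r := Nat.add_le_add (hf2 m) (hg2 m)
    _ = (Cf + Cg) * (m + 1) ^ r := (add_mul _ _ _).symm
end
end

section
/- Closure of q-holonomic functions under rescaling q (Theorem 5.4(f)): let c be a nonzero integer. If f : ℤ^r → V is q-holonomic, then the function g = σ_V ∘ f : ℤ^r → V is q-holonomic. -/
open scoped BigOperators

noncomputable section

/-! Write each `α_i ≤ m` as `α_i = c γ_i + (ρ_i - c m)` with `0 ≤ ρ_i < |c|` and
`0 ≤ γ_i ≤ 2m`. Since `σ(q^{γ·n}) = q^{c γ·n}`, this gives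
`M^α L^β (σ_V ∘ f) = q^{(ρ - c m)·n} σ_V (M^γ L^β f)`, so `F_m (σ_V ∘ f)` lies in the span of
`|c|^r` twists of the `σ_V`-image of `F_{(2r+1)m} f`. As `σ_V` is `σ`-semilinear, that image
spans a space of dimension at most `dim F_{(2r+1)m} f`. -/

open Module TensorProduct

theorem Int.exists_eq_mul_add_sub_of_le {c : ℤ} (hc : c ≠ 0) {a m : ℕ} (ham : a ≤ m) :
    ∃ γ ≤ 2 * m, ∃ ρ < c.natAbs, (a : ℤ) = c * γ + ((ρ : ℤ) - c * m) := by
  have hquot : |(a : ℤ) / c| ≤ m := (Int.abs_ediv_le_abs _ _).trans (by simpa using ham)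
  have hrem : 0 ≤ (a : ℤ) % c ∧ (a : ℤ) % c < c.natAbs :=
    ⟨Int.emod_nonneg _ hc, by simpa using Int.emod_lt _ hc⟩
  rw [abs_le] at hquot
  refine ⟨((a : ℤ) / c + m).toNat, by omega, ((a : ℤ) % c).toNat, by omega, ?_⟩
  rw [Int.toNat_of_nonneg (by omega), Int.toNat_of_nonneg hrem.1]
  linear_combination (Int.mul_ediv_add_emod (a : ℤ) c).symm

section Semilinear

variable {R M N : Type*} [Field R] [AddCommGroup M] [Module R M] [AddCommGroup N] [Module R N]
  {σ : R →+* R}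

theorem exists_finrank_le_card_mul_of_semilinear {ι : Type*} [Fintype ι] (Φ : M →ₛₗ[σ] N)
    (T : ι → N →ₗ[R] N) (W : Submodule R M) [FiniteDimensional R W] :
    ∃ U : Submodule R N, FiniteDimensional R U ∧
      finrank R U ≤ Fintype.card ι * finrank R W ∧ ∀ i, ∀ w ∈ W, T i (Φ w) ∈ U := by
  let b := finBasis R W
  have hW : W = Submodule.span R (Set.range (W.subtype ∘ b)) := by
    rw [Set.range_comp, Submodule.span_image, b.span_eq, Submodule.map_subtype_top]
  let e : ι × Fin (finrank R W) → N := fun p => T p.1 (Φ (b p.2))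
  refine ⟨Submodule.span R (Set.range e), FiniteDimensional.span_of_finite R (Set.finite_range e),
    ?_, fun i w hw => ?_⟩
  · exact (finrank_range_le_card e).trans_eq (by simp)
  · rw [hW] at hw
    have hΦw := Submodule.image_span_subset_span Φ _ ⟨w, hw, rfl⟩
    refine Submodule.span_le.2 ?_ (Submodule.apply_mem_span_image_of_mem_span (T i) hΦw)
    rintro _ ⟨_, ⟨_, ⟨j, rfl⟩, rfl⟩, rfl⟩
    exact Submodule.subset_span ⟨(i, j), rfl⟩

def LinearMap.compLeftₛₗ (φ : M →ₛₗ[σ] N) (I : Type*) : (I → M) →ₛₗ[σ] I → N where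
  toFun h := φ ∘ h
  map_add' _ _ := funext fun _ => map_add φ _ _
  map_smul' _ _ := funext fun _ => map_smulₛₗ φ _ _

end Semilinear

def AlgHom.rTensorₛₗ {k A : Type*} [CommRing k] [CommRing A] [Algebra k A] (σ : A →ₐ[k] A)
    (V₀ : Type*) [AddCommGroup V₀] [Module k V₀] :
    A ⊗[k] V₀ →ₛₗ[(σ : A →+* A)] A ⊗[k] V₀ where
  __ := LinearMap.rTensor V₀ σ.toLinearMap
  map_smul' a v := by
    induction v using TensorProduct.induction_on with
    | zero => simp
    | tmul x y => simp [smul_tmul']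
    | add u w hu hw => simp_all

section QHolonomic

variable {k : Type} [Field k] {V W : Type} [AddCommGroup V] [Module (RatFunc k) V]
  [AddCommGroup W] [Module (RatFunc k) W] {r : ℕ}

variable (k) in
def qPowMul (ρ : Fin r → ℤ) :
    ((Fin r → ℤ) → V) →ₗ[RatFunc k] (Fin r → ℤ) → V where
  toFun h n := ((RatFunc.X : RatFunc k) ^ (∑ i, ρ i * n i)) • h n
  map_add' _ _ := funext fun _ => smul_add _ _ _
  map_smul' _ _ := funext fun _ => smul_comm _ _ _

theorem IsQHolonomicZ.of_forall_shiftZ_eq {f : (Fin r → ℤ) → V} {g : (Fin r → ℤ) → W}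
    {ι : Type*} [Fintype ι] {σ : RatFunc k →+* RatFunc k}
    (Φ : ((Fin r → ℤ) → V) →ₛₗ[σ] (Fin r → ℤ) → W)
    (T : ℕ → ι → ((Fin r → ℤ) → W) →ₗ[RatFunc k] (Fin r → ℤ) → W) (A : ℕ)
    (hf : IsQHolonomicZ k f)
    (h : ∀ m (α β : Fin r → ℕ), (∑ i, α i) + (∑ i, β i) ≤ m → ∃ i, ∃ γ δ : Fin r → ℕ,
      (∑ i, γ i) + (∑ i, δ i) ≤ A * m ∧ shiftZ k α β g = T m i (Φ (shiftZ k γ δ f))) :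
    IsQHolonomicZ k g := by
  obtain ⟨hfin, C, hC⟩ := hf
  have hU : ∀ m, ∃ U : Submodule (RatFunc k) ((Fin r → ℤ) → W), FiniteDimensional (RatFunc k) U ∧
      finrank (RatFunc k) U ≤ Fintype.card ι * (C * (A * m + 1) ^ r) ∧ FmZ k m g ≤ U := by
    intro m
    obtain ⟨U, hUfin, hUrank, hmem⟩ :=
      exists_finrank_le_card_mul_of_semilinear Φ (T m) (FmZ k (A * m) f)
    refine ⟨U, hUfin, hUrank.trans (Nat.mul_le_mul_left _ (hC _)), Submodule.span_le.2 ?_⟩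
    rintro _ ⟨α, β, hαβ, rfl⟩
    obtain ⟨i, γ, δ, hγδ, heq⟩ := h m α β hαβ
    rw [heq]
    exact hmem i _ (Submodule.subset_span ⟨γ, δ, hγδ, rfl⟩)
  refine ⟨fun m => ?_, Fintype.card ι * C * (A + 1) ^ r, fun m => ?_⟩
  · obtain ⟨U, _, -, hle⟩ := hU m
    exact Submodule.finiteDimensional_of_le hle
  · obtain ⟨U, _, hrank, hle⟩ := hU m
    calc finrank (RatFunc k) (FmZ k m g) ≤ finrank (RatFunc k) U := Submodule.finrank_mono hle
      _ ≤ Fintype.card ι * (C * (A * m + 1) ^ r) := hrank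
      _ ≤ Fintype.card ι * (C * ((A + 1) * (m + 1)) ^ r) := by gcongr; nlinarith
      _ = Fintype.card ι * C * (A + 1) ^ r * (m + 1) ^ r := by rw [mul_pow]; ring

theorem shiftZ_rTensorₛₗ_eq {V₀ : Type} [AddCommGroup V₀] [Module k V₀] {c : ℤ}
    {σ : RatFunc k →ₐ[k] RatFunc k} (hσ : σ RatFunc.X = RatFunc.X ^ c)
    {α β γ : Fin r → ℕ} {ρ : Fin r → ℤ} (hαγ : ∀ i, (α i : ℤ) = c * γ i + ρ i)
    (f : (Fin r → ℤ) → RatFunc k ⊗[k] V₀) :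
    shiftZ k α β (σ.rTensorₛₗ V₀ ∘ f) = qPowMul k ρ (σ.rTensorₛₗ V₀ ∘ shiftZ k γ β f) := by
  funext n
  have hexp : ∑ i, (α i : ℤ) * n i = ∑ i, ρ i * n i + c * ∑ i, (γ i : ℤ) * n i := by
    rw [Finset.mul_sum, ← Finset.sum_add_distrib]
    exact Finset.sum_congr rfl fun i _ => by rw [hαγ i]; ring
  have hX : (RatFunc.X : RatFunc k) ≠ 0 := RatFunc.X_ne_zero
  simp only [shiftZ, qPowMul, LinearMap.coe_mk, AddHom.coe_mk, Function.comp_apply,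
    map_smulₛₗ, RingHom.coe_coe, map_zpow₀, hσ, smul_smul, ← zpow_mul, ← zpow_add₀ hX, hexp]

end QHolonomic

open TensorProduct in
theorem qholonomic_rescale_general (k : Type) [Field k] (V₀ : Type)
    [AddCommGroup V₀] [Module k V₀] {r : ℕ}
    (c : ℤ) (hc : c ≠ 0)
    (σ : RatFunc k →ₐ[k] RatFunc k) (hσ : σ RatFunc.X = RatFunc.X ^ c)
    (f : (Fin r → ℤ) → (RatFunc k ⊗[k] V₀)) (hf : IsQHolonomicZ k f) :
    IsQHolonomicZ k (fun n => LinearMap.rTensor V₀ σ.toLinearMap (f n)) := by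
  refine hf.of_forall_shiftZ_eq ((σ.rTensorₛₗ V₀).compLeftₛₗ _)
    (fun m (ρ : Fin r → Fin c.natAbs) => qPowMul k fun i => (ρ i : ℤ) - c * m) (2 * r + 1)
    fun m α β hαβ => ?_
  have hαm : ∀ i, α i ≤ m := fun i =>
    (Finset.single_le_sum (fun j _ => Nat.zero_le (α j)) (Finset.mem_univ i)).trans
      (Nat.le_of_add_right_le hαβ)
  choose γ hγ ρ hρ hαγ using fun i => Int.exists_eq_mul_add_sub_of_le hc (hαm i)
  refine ⟨fun i => ⟨ρ i, hρ i⟩, γ, β, ?_, shiftZ_rTensorₛₗ_eq hσ hαγ f⟩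
  have hγsum : ∑ i, γ i ≤ r * (2 * m) := by
    simpa using Finset.sum_le_sum fun i (_ : i ∈ Finset.univ) => hγ i
  have hβsum : ∑ i, β i ≤ m := Nat.le_of_add_left_le hαβ
  nlinarith

open TensorProduct in
/-- Theorem 5.4(f): closure under rescaling `q ↦ q^c`. Here `V = k(q) ⊗_k V₀`,
`σ : k(q) → k(q)` is the field embedding fixing `k` with `σ(q) = q^c` (`c ≠ 0` an
integer), encoded as a `k`-algebra homomorphism, and `σ_V = σ ⊗ id_{V₀}`. If `f` is
q-holonomic then so is `σ_V ∘ f`. -/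
theorem qholonomic_rescale (k : Type) [Field k] [CharZero k] (V₀ : Type)
    [AddCommGroup V₀] [Module k V₀] {r : ℕ} (hr : 1 ≤ r)
    (c : ℤ) (hc : c ≠ 0)
    (σ : RatFunc k →ₐ[k] RatFunc k) (hσ : σ RatFunc.X = RatFunc.X ^ c)
    (f : (Fin r → ℤ) → (RatFunc k ⊗[k] V₀)) (hf : IsQHolonomicZ k f) :
    IsQHolonomicZ k (fun n => LinearMap.rTensor V₀ σ.toLinearMap (f n)) :=
  qholonomic_rescale_general k V₀ c hc σ hσ f hf
end
end

section
/- Modifying a q-holonomic function preserves q-holonomicity (Proposition 5.8): let f : ℤ^r → V be q-holonomic. (a) If f' : ℤ^r → V agrees with f outside a finite subset of ℤ^r, then f' is q-holonomic. (b) If g : ℤ^{r−1} → V is q-holonomic, a ∈ ℤ, and f' : ℤ^r → V is defined by f'(n_1,…,n_{r−1},n_r) = f(n_1,…,n_{r−1},n_r) whenever n_r ≠ a and f'(n_1,…,n_{r−1},a) = g(n_1,…,n_{r−1}), then f' is q-holonomic. -/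
open scoped BigOperators

noncomputable section

namespace QHolAux

open Submodule Module

variable {k : Type} [Field k] {V : Type} [AddCommGroup V] [Module (RatFunc k) V]

lemma X_pow_ne_one {n : ℕ} (hn : n ≠ 0) : (RatFunc.X : RatFunc k) ^ n ≠ 1 := by
  intro h
  rw [← RatFunc.algebraMap_X, ← map_pow, show (1 : RatFunc k) = algebraMap (Polynomial k) _ 1 by
    simp] at h
  have := RatFunc.algebraMap_injective k h
  have := congrArg Polynomial.natDegree this
  simp [Polynomial.natDegree_X_pow] at this
  exact hn this

lemma X_zpow_injective : Function.Injective (fun t : ℤ => (RatFunc.X : RatFunc k) ^ t) := by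
  have hX : (RatFunc.X : RatFunc k) ≠ 0 := RatFunc.X_ne_zero
  have key : ∀ d : ℤ, (RatFunc.X : RatFunc k) ^ d = 1 → d = 0 := by
    have knat : ∀ m : ℕ, m ≠ 0 → (RatFunc.X : RatFunc k) ^ (m : ℤ) ≠ 1 := by
      intro m hm h
      rw [zpow_natCast] at h
      exact X_pow_ne_one hm h
    intro d hd
    by_contra hd0
    rcases lt_or_gt_of_ne hd0 with h | h
    · have : (RatFunc.X : RatFunc k) ^ (-d) = 1 := by
        rw [zpow_neg, hd, inv_one]
      have h2 : (-d) = ((-d).toNat : ℤ) := by omega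
      rw [h2] at this
      exact knat _ (by omega) this
    · have h2 : d = (d.toNat : ℤ) := by omega
      rw [h2] at hd
      exact knat _ (by omega) hd
  intro t s h
  simp only at h
  have : (RatFunc.X : RatFunc k) ^ (t - s) = 1 := by
    rw [zpow_sub₀ hX, h, div_self (zpow_ne_zero _ hX)]
  have := key _ this
  omega

lemma X_zpow_sub_ne {t a : ℤ} (h : t ≠ a) :
    (RatFunc.X : RatFunc k) ^ t - (RatFunc.X : RatFunc k) ^ a ≠ 0 :=
  sub_ne_zero.mpr (fun he => h (X_zpow_injective he))

section LinAlg

variable {W W' : Type} [AddCommGroup W] [Module (RatFunc k) W]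
  [AddCommGroup W'] [Module (RatFunc k) W']

lemma finrank_map_add_finrank_inf_ker (Φ : W →ₗ[RatFunc k] W') (p : Submodule (RatFunc k) W)
    [FiniteDimensional (RatFunc k) p] :
    finrank (RatFunc k) (p.map Φ) +
      finrank (RatFunc k) ↥(p ⊓ LinearMap.ker Φ) = finrank (RatFunc k) p := by
  have h1 : LinearMap.range (Φ.comp p.subtype) = p.map Φ := by
    rw [LinearMap.range_comp, Submodule.range_subtype]
  have h2 : LinearMap.ker (Φ.comp p.subtype)
      = Submodule.comap p.subtype (p ⊓ LinearMap.ker Φ) := by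
    rw [LinearMap.ker_comp]
    ext x
    simp only [Submodule.mem_comap, Submodule.mem_inf]
    exact ⟨fun h => ⟨x.2, h⟩, fun h => h.2⟩
  have e2 := Submodule.comapSubtypeEquivOfLe (inf_le_left : p ⊓ LinearMap.ker Φ ≤ p)
  have := LinearMap.finrank_range_add_finrank_ker (Φ.comp p.subtype)
  rw [h1, h2] at this
  rw [← this, e2.finrank_eq]

lemma my_finrank_mono {p q : Submodule (RatFunc k) W} [FiniteDimensional (RatFunc k) q]
    (h : p ≤ q) : finrank (RatFunc k) p ≤ finrank (RatFunc k) q :=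
  Submodule.finrank_mono h

lemma fd_finset_sup {ι : Type} (s : Finset ι) (p : ι → Submodule (RatFunc k) W)
    (hp : ∀ i, FiniteDimensional (RatFunc k) (p i)) :
    FiniteDimensional (RatFunc k) ↥(s.sup p) := by
  classical
  induction s using Finset.cons_induction with
  | empty => rw [Finset.sup_empty]; infer_instance
  | cons a s ha ih =>
    rw [Finset.sup_cons]
    haveI := ih
    haveI := hp a
    exact Submodule.finiteDimensional_sup _ _

lemma finrank_finset_sup_le {ι : Type} (s : Finset ι) (p : ι → Submodule (RatFunc k) W)
    (hp : ∀ i, FiniteDimensional (RatFunc k) (p i)) :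
    finrank (RatFunc k) ↥(s.sup p) ≤ ∑ i ∈ s, finrank (RatFunc k) (p i) := by
  classical
  induction s using Finset.cons_induction with
  | empty => simp [Finset.sup_empty]
  | cons a s ha ih =>
    rw [Finset.sup_cons, Finset.sum_cons]
    haveI := fd_finset_sup s p hp
    haveI := hp a
    exact le_trans (Submodule.finrank_add_le_finrank_add_finrank _ _) (by omega)

end LinAlg

section FmZBasic

variable {r : ℕ}

lemma FmZ_finiteDimensional (m : ℕ) (f : (Fin r → ℤ) → V) :
    FiniteDimensional (RatFunc k) (FmZ k m f) := by
  apply FiniteDimensional.span_of_finite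
  apply Set.Finite.subset (Set.finite_range
    (fun p : (Fin r → Fin (m+1)) × (Fin r → Fin (m+1)) =>
      shiftZ k (fun i => (p.1 i : ℕ)) (fun i => (p.2 i : ℕ)) f))
  rintro g ⟨α, β, hle, rfl⟩
  have hα : ∀ i, α i < m + 1 := fun i =>
    Nat.lt_succ_of_le (le_trans (Finset.single_le_sum (f := fun i => α i)
      (fun _ _ => Nat.zero_le _) (Finset.mem_univ i)) (le_trans (Nat.le_add_right _ _) hle))
  have hβ : ∀ i, β i < m + 1 := fun i =>
    Nat.lt_succ_of_le (le_trans (Finset.single_le_sum (f := fun i => β i)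
      (fun _ _ => Nat.zero_le _) (Finset.mem_univ i)) (le_trans (Nat.le_add_left _ _) hle))
  exact ⟨(fun i => ⟨α i, hα i⟩, fun i => ⟨β i, hβ i⟩), rfl⟩

lemma FmZ_mono {m m' : ℕ} (h : m ≤ m') (f : (Fin r → ℤ) → V) : FmZ k m f ≤ FmZ k m' f :=
  Submodule.span_mono (by rintro g ⟨α, β, hle, rfl⟩; exact ⟨α, β, hle.trans h, rfl⟩)

lemma shiftZ_add (α β : Fin r → ℕ) (f h : (Fin r → ℤ) → V) :
    shiftZ k α β (fun n => f n + h n) = shiftZ k α β f + shiftZ k α β h := by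
  funext n; simp [shiftZ, smul_add]

lemma shiftZ_sub (α β : Fin r → ℕ) (f h : (Fin r → ℤ) → V) :
    shiftZ k α β (fun n => f n - h n) = shiftZ k α β f - shiftZ k α β h := by
  funext n; simp [shiftZ, smul_sub]

lemma FmZ_add_le (m : ℕ) (f h : (Fin r → ℤ) → V) :
    FmZ k m (fun n => f n + h n) ≤ FmZ k m f ⊔ FmZ k m h := by
  rw [FmZ, Submodule.span_le]
  rintro g ⟨α, β, hle, rfl⟩
  rw [shiftZ_add]
  exact Submodule.add_mem _
    (Submodule.mem_sup_left (Submodule.subset_span ⟨α, β, hle, rfl⟩))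
    (Submodule.mem_sup_right (Submodule.subset_span ⟨α, β, hle, rfl⟩))

lemma FmZ_sub_le (m : ℕ) (f h : (Fin r → ℤ) → V) :
    FmZ k m (fun n => f n - h n) ≤ FmZ k m f ⊔ FmZ k m h := by
  rw [FmZ, Submodule.span_le]
  rintro g ⟨α, β, hle, rfl⟩
  rw [shiftZ_sub]
  exact Submodule.sub_mem _
    (Submodule.mem_sup_left (Submodule.subset_span ⟨α, β, hle, rfl⟩))
    (Submodule.mem_sup_right (Submodule.subset_span ⟨α, β, hle, rfl⟩))

end FmZBasic

section Ops

variable (k)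
variable {r : ℕ}

/-- Evaluation at last coordinate `= a`. -/
def evalLastMap (a : ℤ) :
    ((Fin (r+1) → ℤ) → V) →ₗ[RatFunc k] ((Fin r → ℤ) → V) where
  toFun ψ := fun n => ψ (Fin.snoc n a)
  map_add' _ _ := rfl
  map_smul' _ _ := rfl

/-- The operator `M_last - q^a`. -/
def mulTMap (a : ℤ) :
    ((Fin (r+1) → ℤ) → V) →ₗ[RatFunc k] ((Fin (r+1) → ℤ) → V) where
  toFun ψ := fun n =>
    ((RatFunc.X : RatFunc k) ^ (n (Fin.last r)) - (RatFunc.X : RatFunc k) ^ a) • ψ n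
  map_add' ψ φ := by funext n; simp [smul_add]
  map_smul' c ψ := by
    funext n
    simp only [Pi.smul_apply, RingHom.id_apply]
    exact smul_comm _ _ _

/-- The operator `L_last^b`. -/
def shiftLastMap (b : ℕ) :
    ((Fin (r+1) → ℤ) → V) →ₗ[RatFunc k] ((Fin (r+1) → ℤ) → V) where
  toFun ψ := fun n => ψ (fun i => n i + if i = Fin.last r then (b : ℤ) else 0)
  map_add' _ _ := rfl
  map_smul' _ _ := rfl

/-- Extension by zero off the slice `{n_last = b}`. -/
def extLastMap (b : ℤ) :
    ((Fin r → ℤ) → V) →ₗ[RatFunc k] ((Fin (r+1) → ℤ) → V) where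
  toFun φ := fun n => if n (Fin.last r) = b then φ (fun i => n (Fin.castSucc i)) else 0
  map_add' φ φ' := by
    funext n; by_cases h : n (Fin.last r) = b <;> simp [h]
  map_smul' c φ := by
    funext n; by_cases h : n (Fin.last r) = b <;> simp [h]

end Ops

section OpsLemmas

variable {r : ℕ}

lemma evalLast_shiftZ (a : ℤ) (α β : Fin r → ℕ) (f : (Fin (r+1) → ℤ) → V) :
    shiftZ k α β (fun n => f (Fin.snoc n a)) =
      evalLastMap k a (shiftZ k (Fin.snoc α 0) (Fin.snoc β 0) f) := by
  funext n
  have hexp : (∑ i : Fin (r+1), (((Fin.snoc α 0 : Fin (r+1) → ℕ) i : ℤ))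
        * (Fin.snoc n a : Fin (r+1) → ℤ) i) = ∑ i : Fin r, (α i : ℤ) * n i := by
    rw [Fin.sum_univ_castSucc]
    simp
  have harg : (fun i => (Fin.snoc n a : Fin (r+1) → ℤ) i
        + (((Fin.snoc β 0 : Fin (r+1) → ℕ) i : ℤ))) =
      (Fin.snoc (fun i => n i + (β i : ℤ)) a : Fin (r+1) → ℤ) := by
    funext i
    induction i using Fin.lastCases with
    | last => simp
    | cast j => simp
  simp only [shiftZ, evalLastMap, LinearMap.coe_mk, AddHom.coe_mk]
  rw [hexp, harg]

lemma mulT_shiftZ (a : ℤ) (α β : Fin (r+1) → ℕ) (f : (Fin (r+1) → ℤ) → V) :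
    mulTMap k a (shiftZ k α β f) =
      shiftZ k (fun j => α j + if j = Fin.last r then 1 else 0) β f
        - (RatFunc.X : RatFunc k) ^ a • shiftZ k α β f := by
  funext n
  have h1 : ∀ j : Fin r, (Fin.castSucc j) ≠ Fin.last r :=
    fun j => ne_of_lt (Fin.castSucc_lt_last j)
  have hsum : (∑ i, (((α i + if i = Fin.last r then 1 else 0 : ℕ)) : ℤ) * n i)
      = n (Fin.last r) + ∑ i, (α i : ℤ) * n i := by
    rw [Fin.sum_univ_castSucc, Fin.sum_univ_castSucc (f := fun i => (α i : ℤ) * n i)]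
    simp only [h1, if_neg, if_pos, add_zero]
    simp [h1]
    push_cast
    ring
  simp only [mulTMap, shiftZ, LinearMap.coe_mk, AddHom.coe_mk, Pi.sub_apply, Pi.smul_apply]
  rw [sub_smul, smul_smul, ← zpow_add₀ (RatFunc.X_ne_zero (K := k)), hsum]

lemma evalLast_mulT (a : ℤ) (ψ : (Fin (r+1) → ℤ) → V) :
    evalLastMap k a (mulTMap k a ψ) = 0 := by
  funext n
  simp [evalLastMap, mulTMap, Fin.snoc_last]

lemma mem_ker_mulT_iff (a : ℤ) {ψ : (Fin (r+1) → ℤ) → V} :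
    ψ ∈ LinearMap.ker (mulTMap k a) ↔ ∀ n, n (Fin.last r) ≠ a → ψ n = 0 := by
  rw [LinearMap.mem_ker]
  constructor
  · intro h n hn
    have h2 := congrFun h n
    simp only [mulTMap, LinearMap.coe_mk, AddHom.coe_mk, Pi.zero_apply] at h2
    rcases smul_eq_zero.mp h2 with h3 | h3
    · exact absurd h3 (X_zpow_sub_ne hn)
    · exact h3
  · intro h
    funext n
    simp only [mulTMap, LinearMap.coe_mk, AddHom.coe_mk, Pi.zero_apply]
    by_cases hn : n (Fin.last r) = a
    · rw [hn, sub_self, zero_smul]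
    · rw [h n hn, smul_zero]

lemma shiftLast_shiftZ (b : ℕ) (α β : Fin (r+1) → ℕ) (f : (Fin (r+1) → ℤ) → V) :
    shiftLastMap k b (shiftZ k α β f)
      = ((RatFunc.X : RatFunc k) ^ ((α (Fin.last r) : ℤ) * (b : ℤ))) •
        shiftZ k α (fun j => β j + if j = Fin.last r then b else 0) f := by
  funext n
  have h1 : ∀ j : Fin r, (Fin.castSucc j) ≠ Fin.last r :=
    fun j => ne_of_lt (Fin.castSucc_lt_last j)
  have hexp : (∑ i, (α i : ℤ) * (n i + if i = Fin.last r then (b : ℤ) else 0))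
      = (α (Fin.last r) : ℤ) * (b : ℤ) + ∑ i, (α i : ℤ) * n i := by
    rw [Fin.sum_univ_castSucc, Fin.sum_univ_castSucc (f := fun i => (α i : ℤ) * n i)]
    simp [h1]
    ring
  have harg : (fun i => (n i + if i = Fin.last r then (b : ℤ) else 0) + (β i : ℤ))
      = fun i => n i + (((β i + if i = Fin.last r then b else 0 : ℕ)) : ℤ) := by
    funext i
    by_cases hi : i = Fin.last r <;> simp [hi] <;> push_cast <;> ring
  simp only [shiftLastMap, shiftZ, LinearMap.coe_mk, AddHom.coe_mk, Pi.smul_apply]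
  rw [harg, hexp, zpow_add₀ (RatFunc.X_ne_zero (K := k)), mul_smul]

lemma ext_shiftZ (a : ℤ) (h0 : (Fin r → ℤ) → V) (α β : Fin (r+1) → ℕ) :
    shiftZ k α β (fun n => if n (Fin.last r) = a then h0 (fun i => n (Fin.castSucc i)) else 0)
      = ((RatFunc.X : RatFunc k) ^ ((α (Fin.last r) : ℤ) * (a - (β (Fin.last r) : ℤ)))) •
        extLastMap k (a - (β (Fin.last r) : ℤ))
          (shiftZ k (fun i => α (Fin.castSucc i)) (fun i => β (Fin.castSucc i)) h0) := by
  funext n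
  simp only [shiftZ, extLastMap, LinearMap.coe_mk, AddHom.coe_mk, Pi.smul_apply]
  by_cases hc : n (Fin.last r) = a - (β (Fin.last r) : ℤ)
  · have hc' : n (Fin.last r) + (β (Fin.last r) : ℤ) = a := by omega
    rw [if_pos hc', if_pos hc, smul_smul, ← zpow_add₀ (RatFunc.X_ne_zero (K := k))]
    congr 1
    rw [Fin.sum_univ_castSucc, hc]
    ring
  · have hc' : ¬(n (Fin.last r) + (β (Fin.last r) : ℤ) = a) := by omega
    rw [if_neg hc', if_neg hc, smul_zero, smul_zero]

end OpsLemmas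
section MapLemmas

variable {r : ℕ}

lemma map_shiftLast_FmZ_le (b j : ℕ) (f : (Fin (r+1) → ℤ) → V) :
    (FmZ k j f).map (shiftLastMap k b) ≤ FmZ k (j + b) f := by
  rw [FmZ, Submodule.map_span, Submodule.span_le]
  rintro x ⟨ψ, ⟨α, β, hle, rfl⟩, rfl⟩
  simp only [SetLike.mem_coe]
  rw [shiftLast_shiftZ]
  apply Submodule.smul_mem
  apply Submodule.subset_span
  refine ⟨α, _, ?_, rfl⟩
  have hs : (∑ i, (β i + if i = Fin.last r then b else 0)) = (∑ i, β i) + b := by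
    rw [Finset.sum_add_distrib]
    simp [Finset.sum_ite_eq']
  omega

lemma FmZ_restr_le (a : ℤ) {m j : ℕ} (hmj : m ≤ j) (f : (Fin (r+1) → ℤ) → V) :
    FmZ k m (fun n => f (Fin.snoc n a)) ≤ (FmZ k j f).map (evalLastMap k a) := by
  rw [FmZ, Submodule.span_le]
  rintro x ⟨α, β, hle, rfl⟩
  simp only [SetLike.mem_coe]
  rw [evalLast_shiftZ]
  refine ⟨_, Submodule.subset_span ⟨Fin.snoc α 0, Fin.snoc β 0, ?_, rfl⟩, rfl⟩
  have h1 : (∑ i, (Fin.snoc α 0 : Fin (r+1) → ℕ) i) = ∑ i, α i := by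
    rw [Fin.sum_univ_castSucc]; simp
  have h2 : (∑ i, (Fin.snoc β 0 : Fin (r+1) → ℕ) i) = ∑ i, β i := by
    rw [Fin.sum_univ_castSucc]; simp
  omega

lemma map_mulT_FmZ_le (a : ℤ) (j : ℕ) (f : (Fin (r+1) → ℤ) → V) :
    (FmZ k j f).map (mulTMap k a) ≤ FmZ k (j+1) f ⊓ LinearMap.ker (evalLastMap k a) := by
  apply le_inf
  · rw [FmZ, Submodule.map_span, Submodule.span_le]
    rintro x ⟨ψ, ⟨α, β, hle, rfl⟩, rfl⟩
    simp only [SetLike.mem_coe]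
    rw [mulT_shiftZ]
    apply Submodule.sub_mem
    · apply Submodule.subset_span
      refine ⟨_, β, ?_, rfl⟩
      have hs : (∑ i, (α i + if i = Fin.last r then 1 else 0)) = (∑ i, α i) + 1 := by
        rw [Finset.sum_add_distrib]
        simp [Finset.sum_ite_eq']
      omega
    · exact Submodule.smul_mem _ _ (Submodule.subset_span ⟨α, β, by omega, rfl⟩)
  · rw [Submodule.map_le_iff_le_comap]
    intro ψ _
    simp only [Submodule.mem_comap, LinearMap.mem_ker]
    exact evalLast_mulT a ψ

set_option synthInstance.maxHeartbeats 1000000 in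
set_option maxHeartbeats 1000000 in
lemma kappa_le (a : ℤ) (j p : ℕ) (f : (Fin (r+1) → ℤ) → V) :
    (p + 1) * finrank (RatFunc k) ↥(FmZ k j f ⊓ LinearMap.ker (mulTMap k a))
      ≤ finrank (RatFunc k) ↥(FmZ k (j + p) f) := by
  classical
  set S := FmZ k j f ⊓ LinearMap.ker (mulTMap k a) with hSdef
  haveI : FiniteDimensional (RatFunc k) ↥(FmZ k j f) := FmZ_finiteDimensional j f
  haveI : FiniteDimensional (RatFunc k) ↥S :=
    Submodule.finiteDimensional_of_le (inf_le_left : S ≤ FmZ k j f)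
  haveI : FiniteDimensional (RatFunc k) ↥(FmZ k (j + p) f) := FmZ_finiteDimensional (j+p) f
  set Θ : (Fin (p+1) → ↥S) →ₗ[RatFunc k] ((Fin (r+1) → ℤ) → V) :=
    ∑ b : Fin (p+1), (shiftLastMap k (b : ℕ)).comp (S.subtype.comp (LinearMap.proj b)) with hΘ
  have happ : ∀ v : Fin (p+1) → ↥S,
      Θ v = ∑ b : Fin (p+1), shiftLastMap k (b : ℕ) ((v b : (Fin (r+1) → ℤ) → V)) := by
    intro v
    rw [hΘ]
    simp [LinearMap.sum_apply]
  have hmemS : ∀ (v : Fin (p+1) → ↥S) (b : Fin (p+1)),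
      ((v b : (Fin (r+1) → ℤ) → V)) ∈ FmZ k j f :=
    fun v b => (Submodule.mem_inf.mp (v b).2).1
  have hkerS : ∀ (v : Fin (p+1) → ↥S) (b : Fin (p+1)) (n : Fin (r+1) → ℤ),
      n (Fin.last r) ≠ a → ((v b : (Fin (r+1) → ℤ) → V)) n = 0 :=
    fun v b => (mem_ker_mulT_iff a).mp (Submodule.mem_inf.mp (v b).2).2
  have hrange : LinearMap.range Θ ≤ FmZ k (j + p) f := by
    rintro x ⟨v, rfl⟩
    rw [happ]
    apply Submodule.sum_mem
    intro b _
    apply FmZ_mono (show j + (b : ℕ) ≤ j + p by omega)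
    exact map_shiftLast_FmZ_le (b : ℕ) j f ⟨_, hmemS v b, rfl⟩
  have hinj : Function.Injective Θ := by
    refine (injective_iff_map_eq_zero Θ).mpr ?_
    intro v hv
    have hv' : ∀ N : Fin (r+1) → ℤ,
        (∑ b' : Fin (p+1),
          ((v b' : (Fin (r+1) → ℤ) → V))
            (fun i => N i + if i = Fin.last r then ((b' : ℕ) : ℤ) else 0)) = 0 := by
      intro N
      have h1 : Θ v N = 0 := by rw [hv]; rfl
      rw [happ] at h1
      rw [Finset.sum_apply] at h1
      simpa only [shiftLastMap, LinearMap.coe_mk, AddHom.coe_mk] using h1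
    have hcomp : ∀ (b : Fin (p+1)) (n : Fin (r+1) → ℤ),
        ((v b : (Fin (r+1) → ℤ) → V)) n = 0 := by
      intro b n
      by_cases hn : n (Fin.last r) = a
      · have h1 := hv' (fun i => if i = Fin.last r then a - ((b : ℕ) : ℤ) else n i)
        rw [Finset.sum_eq_single b] at h1
        · have harg : (fun i => (if i = Fin.last r then a - ((b : ℕ) : ℤ) else n i)
              + if i = Fin.last r then ((b : ℕ) : ℤ) else 0) = n := by
            funext i
            by_cases hi : i = Fin.last r
            · subst hi
              rw [if_pos rfl, if_pos rfl, hn]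
              ring
            · rw [if_neg hi, if_neg hi]
              ring
          rwa [harg] at h1
        · intro b' _ hb'
          apply hkerS v b'
          show (if Fin.last r = Fin.last r then a - ((b : ℕ) : ℤ) else n (Fin.last r))
              + (if Fin.last r = Fin.last r then ((b' : ℕ) : ℤ) else 0) ≠ a
          rw [if_pos rfl, if_pos rfl]
          have hbb : (b' : ℕ) ≠ (b : ℕ) := fun hc => hb' (Fin.ext hc)
          omega
        · intro hb
          exact absurd (Finset.mem_univ b) hb
      · exact hkerS v b n hn
    funext b
    exact Subtype.ext (funext fun n => hcomp b n)
  haveI : ∀ b : Fin (p+1), Module.Free (RatFunc k) ↥S := fun _ => inferInstance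
  haveI : ∀ b : Fin (p+1), Module.Finite (RatFunc k) ↥S := fun _ => inferInstance
  have hdom : finrank (RatFunc k) (Fin (p+1) → ↥S) = (p+1) * finrank (RatFunc k) ↥S := by
    rw [Module.finrank_pi_fintype (RatFunc k)]
    simp [Finset.sum_const, Finset.card_univ]
  have hr := LinearMap.finrank_range_of_inj hinj
  calc (p + 1) * finrank (RatFunc k) ↥S
      = finrank (RatFunc k) (Fin (p+1) → ↥S) := hdom.symm
    _ = finrank (RatFunc k) ↥(LinearMap.range Θ) := hr.symm
    _ ≤ finrank (RatFunc k) ↥(FmZ k (j + p) f) := Submodule.finrank_mono hrange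

end MapLemmas
section Restriction

variable {r : ℕ}

set_option synthInstance.maxHeartbeats 1000000 in
set_option maxHeartbeats 1000000 in
/-- The restriction of a q-holonomic function in `r+1` variables to the hyperplane
`n_last = a` satisfies the dimension bound appropriate for `r` variables. -/
lemma restr_bound (a : ℤ) (f : (Fin (r+1) → ℤ) → V) (C : ℕ)
    (hC : ∀ m, finrank (RatFunc k) ↥(FmZ k m f) ≤ C * (m+1)^(r+1)) (m : ℕ) :
    finrank (RatFunc k) ↥(FmZ k m (fun n => f (Fin.snoc n a)))
      ≤ (C * (3^(r+1) + 4^(r+1))) * (m+1)^r := by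
  haveI : ∀ j : ℕ, FiniteDimensional (RatFunc k) ↥(FmZ k j f) :=
    fun j => FmZ_finiteDimensional j f
  set g : (Fin r → ℤ) → V := fun n => f (Fin.snoc n a) with hg
  set d := finrank (RatFunc k) ↥(FmZ k m g) with hd
  set K := C * 4^(r+1) * (m+1)^r with hK
  set κ : ℕ → ℕ :=
    fun j => finrank (RatFunc k) ↥(FmZ k j f ⊓ LinearMap.ker (mulTMap k a)) with hκ
  set φ : ℕ → ℕ := fun j => finrank (RatFunc k) ↥(FmZ k j f) with hφ
  have hstar : ∀ j, m ≤ j → d + φ j ≤ φ (j+1) + κ j := by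
    intro j hj
    have h1 := finrank_map_add_finrank_inf_ker (evalLastMap k a) (FmZ k (j+1) f)
    have h2 := finrank_map_add_finrank_inf_ker (mulTMap k a) (FmZ k j f)
    have h3 : d ≤ finrank (RatFunc k) ↥((FmZ k (j+1) f).map (evalLastMap k a)) := by
      rw [hd]
      exact Submodule.finrank_mono (FmZ_restr_le a (le_trans hj (Nat.le_succ j)) f)
    have h4 : finrank (RatFunc k) ↥((FmZ k j f).map (mulTMap k a))
        ≤ finrank (RatFunc k) ↥(FmZ k (j+1) f ⊓ LinearMap.ker (evalLastMap k a)) := by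
      haveI : FiniteDimensional (RatFunc k)
          ↥(FmZ k (j+1) f ⊓ LinearMap.ker (evalLastMap k a)) :=
        Submodule.finiteDimensional_of_le inf_le_left
      exact Submodule.finrank_mono (map_mulT_FmZ_le a j f)
    simp only [hκ, hφ]
    omega
  have hkappa : ∀ j, m ≤ j → j ≤ 2*m+1 → κ j ≤ K := by
    intro j h1 h2
    have hk := kappa_le (k := k) a j j f
    have h6 : (j+1) * κ j ≤ K * (m+1) := by
      calc (j+1) * κ j ≤ finrank (RatFunc k) ↥(FmZ k (j+j) f) := hk
        _ ≤ C * (j+j+1)^(r+1) := hC _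
        _ ≤ C * (4*(m+1))^(r+1) :=
            Nat.mul_le_mul_left _ (Nat.pow_le_pow_left (by omega) _)
        _ = K * (m+1) := by rw [hK, mul_pow, pow_succ]; ring
    have h5 : (m+1) * κ j ≤ (j+1) * κ j := Nat.mul_le_mul_right _ (by omega)
    have h7 : (m+1) * κ j ≤ (m+1) * K := by
      rw [Nat.mul_comm K (m+1)] at h6
      exact le_trans h5 h6
    exact Nat.le_of_mul_le_mul_left h7 (by omega)
  have hind : ∀ i, i ≤ m+2 → i * d + φ m ≤ φ (m+i) + i * K := by
    intro i
    induction i with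
    | zero => intro _; simp
    | succ i ih =>
      intro hi
      have hii := ih (by omega)
      have hs := hstar (m+i) (by omega)
      have hκi := hkappa (m+i) (by omega) (by omega)
      rw [← Nat.add_assoc, add_mul, one_mul, add_mul, one_mul]
      generalize hA : i * d = A at hii ⊢
      generalize hB : i * K = B at hii ⊢
      omega
  have hfin := hind (m+2) (le_refl _)
  have hφ2 : φ (m+(m+2)) ≤ (C * 3^(r+1) * (m+1)^r) * (m+2) := by
    calc φ (m+(m+2)) ≤ C * ((m+(m+2))+1)^(r+1) := hC _
      _ ≤ C * (3*(m+1))^(r+1) :=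
          Nat.mul_le_mul_left _ (Nat.pow_le_pow_left (by omega) _)
      _ = C * 3^(r+1) * ((m+1)^r * (m+1)) := by rw [mul_pow, pow_succ]; ring
      _ ≤ C * 3^(r+1) * ((m+1)^r * (m+2)) :=
          Nat.mul_le_mul_left _ (Nat.mul_le_mul_left _ (by omega))
      _ = (C * 3^(r+1) * (m+1)^r) * (m+2) := by ring
  have hdd : d * (m+2) ≤ (C * 3^(r+1) * (m+1)^r + K) * (m+2) := by
    calc d * (m+2) = (m+2) * d := Nat.mul_comm _ _
      _ ≤ (m+2) * d + φ m := Nat.le_add_right _ _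
      _ ≤ φ (m+(m+2)) + (m+2) * K := hfin
      _ ≤ (C * 3^(r+1) * (m+1)^r) * (m+2) + K * (m+2) := by
          exact Nat.add_le_add hφ2 (le_of_eq (Nat.mul_comm _ _))
      _ = (C * 3^(r+1) * (m+1)^r + K) * (m+2) := (Nat.add_mul _ _ _).symm
  have hfinal : d ≤ C * 3^(r+1) * (m+1)^r + K :=
    Nat.le_of_mul_le_mul_right hdd (by omega)
  have heq : C * 3^(r+1) * (m+1)^r + K = (C * (3^(r+1) + 4^(r+1))) * (m+1)^r := by
    rw [hK]; ring
  rw [heq] at hfinal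
  exact hfinal

end Restriction
section Ext

variable {r : ℕ}

lemma FmZ_ext_le (a : ℤ) (h0 : (Fin r → ℤ) → V) (m : ℕ) :
    FmZ k m (fun n => if n (Fin.last r) = a then h0 (fun i => n (Fin.castSucc i)) else 0)
      ≤ (Finset.range (m+1)).sup
          (fun b => (FmZ k m h0).map (extLastMap k (a - (b : ℤ)))) := by
  rw [FmZ, Submodule.span_le]
  rintro x ⟨α, β, hle, rfl⟩
  simp only [SetLike.mem_coe]
  rw [ext_shiftZ]
  apply Submodule.smul_mem
  have hsb : β (Fin.last r) ≤ ∑ i, β i :=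
    Finset.single_le_sum (f := β) (fun i _ => Nat.zero_le (β i)) (Finset.mem_univ _)
  have hb : β (Fin.last r) ∈ Finset.range (m+1) := by
    rw [Finset.mem_range]
    omega
  have hle2 : (FmZ k m h0).map (extLastMap k (a - ((β (Fin.last r) : ℕ) : ℤ)))
      ≤ (Finset.range (m+1)).sup
          (fun b => (FmZ k m h0).map (extLastMap k (a - (b : ℤ)))) :=
    Finset.le_sup (s := Finset.range (m+1))
      (f := fun b : ℕ => (FmZ k m h0).map (extLastMap k (a - (b : ℤ)))) hb
  refine hle2 ⟨_, Submodule.subset_span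
    ⟨(fun i => α (Fin.castSucc i)), (fun i => β (Fin.castSucc i)), ?_, rfl⟩, rfl⟩
  have h1 : (∑ i : Fin (r+1), α i)
      = (∑ i : Fin r, α (Fin.castSucc i)) + α (Fin.last r) := Fin.sum_univ_castSucc _
  have h2 : (∑ i : Fin (r+1), β i)
      = (∑ i : Fin r, β (Fin.castSucc i)) + β (Fin.last r) := Fin.sum_univ_castSucc _
  have e1 : (∑ i : Fin r, (fun i => α (Fin.castSucc i)) i) = ∑ i : Fin r, α (Fin.castSucc i) :=
    rfl
  have e2 : (∑ i : Fin r, (fun i => β (Fin.castSucc i)) i) = ∑ i : Fin r, β (Fin.castSucc i) :=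
    rfl
  omega

lemma finrank_FmZ_ext_le (a : ℤ) (h0 : (Fin r → ℤ) → V) (m : ℕ) :
    finrank (RatFunc k)
        ↥(FmZ k m (fun n => if n (Fin.last r) = a then h0 (fun i => n (Fin.castSucc i)) else 0))
      ≤ (m+1) * finrank (RatFunc k) ↥(FmZ k m h0) := by
  haveI : FiniteDimensional (RatFunc k) ↥(FmZ k m h0) := FmZ_finiteDimensional m h0
  have hfd : ∀ b : ℕ, FiniteDimensional (RatFunc k)
      ↥((FmZ k m h0).map (extLastMap k (a - (b : ℤ)))) := fun b => inferInstance
  haveI := fd_finset_sup (Finset.range (m+1))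
    (fun b => (FmZ k m h0).map (extLastMap k (a - (b : ℤ)))) hfd
  have s1 : finrank (RatFunc k)
      ↥(FmZ k m (fun n => if n (Fin.last r) = a then h0 (fun i => n (Fin.castSucc i)) else 0))
      ≤ finrank (RatFunc k) ↥((Finset.range (m+1)).sup
          (fun b => (FmZ k m h0).map (extLastMap k (a - (b : ℤ))))) :=
    Submodule.finrank_mono (FmZ_ext_le a h0 m)
  have s2 : finrank (RatFunc k) ↥((Finset.range (m+1)).sup
        (fun b => (FmZ k m h0).map (extLastMap k (a - (b : ℤ)))))
      ≤ ∑ b ∈ Finset.range (m+1),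
          finrank (RatFunc k) ↥((FmZ k m h0).map (extLastMap k (a - (b : ℤ)))) :=
    finrank_finset_sup_le _ _ hfd
  have s3 : (∑ b ∈ Finset.range (m+1),
        finrank (RatFunc k) ↥((FmZ k m h0).map (extLastMap k (a - (b : ℤ)))))
      ≤ ∑ _b ∈ Finset.range (m+1), finrank (RatFunc k) ↥(FmZ k m h0) :=
    Finset.sum_le_sum (fun b _ => Submodule.finrank_map_le _ _)
  have s4 : (∑ _b ∈ Finset.range (m+1), finrank (RatFunc k) ↥(FmZ k m h0))
      = (m+1) * finrank (RatFunc k) ↥(FmZ k m h0) := by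
    simp [Finset.sum_const, Finset.card_range]
  exact s1.trans (s2.trans (s3.trans_eq s4))

end Ext

section FinSupp

variable {r : ℕ}

set_option maxHeartbeats 1000000 in
set_option synthInstance.maxHeartbeats 1000000 in
lemma finsupp_bound (h : (Fin r → ℤ) → V) (S : Finset (Fin r → ℤ))
    (hsupp : ∀ n, n ∉ S → h n = 0) (m : ℕ) :
    ∃ W : Submodule (RatFunc k) ((Fin r → ℤ) → V), FiniteDimensional (RatFunc k) ↥W ∧
      FmZ k m h ≤ W ∧ finrank (RatFunc k) ↥W ≤ S.card * (m+1)^r := by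
  classical
  set uF : (Fin r → ℤ) → (Fin r → ℕ) → ((Fin r → ℤ) → V) :=
    fun s β => fun n => if (fun i => n i + (β i : ℤ)) = s then h s else 0 with huF
  set Bm : Finset (Fin r → ℕ) := Fintype.piFinset (fun _ => Finset.range (m+1)) with hBm
  set U : Finset ((Fin r → ℤ) → V) := (S ×ˢ Bm).image (fun p => uF p.1 p.2) with hU
  refine ⟨Submodule.span (RatFunc k) (U : Set _), ?_, ?_, ?_⟩
  · exact FiniteDimensional.span_of_finite _ U.finite_toSet
  · rw [FmZ, Submodule.span_le]
    rintro x ⟨α, β, hle, rfl⟩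
    simp only [SetLike.mem_coe]
    have hsum : (∑ s ∈ S,
        ((RatFunc.X : RatFunc k) ^ (∑ i, (α i : ℤ) * (s i - (β i : ℤ)))) • uF s β)
          = shiftZ k α β h := by
      funext n
      calc (∑ s ∈ S,
          ((RatFunc.X : RatFunc k) ^ (∑ i, (α i : ℤ) * (s i - (β i : ℤ)))) • uF s β) n
          = ∑ s ∈ S, if (fun i => n i + (β i : ℤ)) = s then
              ((RatFunc.X : RatFunc k) ^ (∑ i, (α i : ℤ) * (s i - (β i : ℤ)))) • h s
            else 0 := by
            rw [Finset.sum_apply]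
            apply Finset.sum_congr rfl
            intro s _
            simp only [huF, Pi.smul_apply]
            split_ifs with hcond
            · rfl
            · exact smul_zero _
        _ = if (fun i => n i + (β i : ℤ)) ∈ S then
              ((RatFunc.X : RatFunc k) ^
                (∑ i, (α i : ℤ) * ((n i + (β i : ℤ)) - (β i : ℤ)))) •
                h (fun i => n i + (β i : ℤ))
            else 0 := Finset.sum_ite_eq S _ _
        _ = shiftZ k α β h n := by
            by_cases hmem : (fun i => n i + (β i : ℤ)) ∈ S
            · rw [if_pos hmem,
                show (∑ i, (α i : ℤ) * ((n i + (β i : ℤ)) - (β i : ℤ)))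
                    = ∑ i, (α i : ℤ) * n i from
                  Finset.sum_congr rfl (fun i _ => by ring)]
              rfl
            · rw [if_neg hmem]
              show (0 : V) = ((RatFunc.X : RatFunc k) ^ (∑ i, (α i : ℤ) * n i)) •
                h (fun i => n i + (β i : ℤ))
              rw [hsupp _ hmem, smul_zero]
    rw [← hsum]
    apply Submodule.sum_mem
    intro s hs
    apply Submodule.smul_mem
    apply Submodule.subset_span
    have hβB : β ∈ Bm := by
      rw [hBm, Fintype.mem_piFinset]
      intro i
      rw [Finset.mem_range]
      have hsb : β i ≤ ∑ j, β j :=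
        Finset.single_le_sum (f := β) (fun j _ => Nat.zero_le (β j)) (Finset.mem_univ _)
      omega
    exact Finset.mem_coe.mpr (Finset.mem_image.mpr
      ⟨(s, β), Finset.mem_product.mpr ⟨hs, hβB⟩, rfl⟩)
  · have t1 : finrank (RatFunc k)
        ↥(Submodule.span (RatFunc k) (U : Set ((Fin r → ℤ) → V))) ≤ U.card := by
      have h : (U : Set ((Fin r → ℤ) → V)).finrank (RatFunc k) ≤ U.card :=
        finrank_span_finset_le_card U
      unfold Set.finrank at h
      exact h
    calc finrank (RatFunc k) ↥(Submodule.span (RatFunc k) (U : Set ((Fin r → ℤ) → V)))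
        ≤ U.card := t1
      _ ≤ (S ×ˢ Bm).card := Finset.card_image_le
      _ = S.card * Bm.card := Finset.card_product _ _
      _ = S.card * (m+1)^r := by
          rw [hBm, Fintype.card_piFinset]
          simp

end FinSupp
end QHolAux

set_option maxHeartbeats 1000000 in
/-- Proposition 5.8: modifying a q-holonomic function preserves q-holonomicity.
(a) If `f' : ℤ^r → V` agrees with a q-holonomic `f` outside a finite set, then `f'`
is q-holonomic. (b) If `f : ℤ^(r+1) → V` and `g : ℤ^r → V` are q-holonomic, `a ∈ ℤ`,
and `f'` agrees with `f` off the hyperplane `{n_{r+1} = a}`, on which it is given by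
`g`, then `f'` is q-holonomic. (In (b), `ℤ^(r+1)` with `r + 1 ≥ 1` plays the role of
`ℤ^r` with `r ≥ 1`.) -/
theorem qholonomic_modify (k : Type) [Field k] [CharZero k] {V : Type}
    [AddCommGroup V] [Module (RatFunc k) V] {r : ℕ} :
    (∀ f f' : (Fin (r + 1) → ℤ) → V, IsQHolonomicZ k f →
      {n : Fin (r + 1) → ℤ | f' n ≠ f n}.Finite → IsQHolonomicZ k f') ∧
    (∀ (f f' : (Fin (r + 1) → ℤ) → V) (g : (Fin r → ℤ) → V) (a : ℤ),
      IsQHolonomicZ k f → IsQHolonomicZ k g →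
      (∀ (n : Fin r → ℤ) (t : ℤ), t ≠ a → f' (Fin.snoc n t) = f (Fin.snoc n t)) →
      (∀ n : Fin r → ℤ, f' (Fin.snoc n a) = g n) →
      IsQHolonomicZ k f') := by

  constructor
  · -- part (a)
    intro f f' hf hfin
    obtain ⟨-, C, hC⟩ := hf
    refine ⟨fun m => QHolAux.FmZ_finiteDimensional m f', ?_⟩
    classical
    refine ⟨C + hfin.toFinset.card, fun m => ?_⟩
    have hsupp : ∀ n, n ∉ hfin.toFinset → f' n - f n = 0 := by
      intro n hn
      rw [Set.Finite.mem_toFinset] at hn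
      simp only [Set.mem_setOf_eq, not_not] at hn
      rw [sub_eq_zero]
      exact hn
    obtain ⟨W, hWfd, hWle, hWrank⟩ :=
      QHolAux.finsupp_bound (k := k) (fun n => f' n - f n) hfin.toFinset hsupp m
    have hf'eq : f' = fun n => f n + (f' n - f n) := by
      funext n; simp
    have hle : FmZ k m f' ≤ FmZ k m f ⊔ W := by
      refine le_trans ?_ (sup_le_sup_left hWle _)
      conv_lhs => rw [hf'eq]
      exact QHolAux.FmZ_add_le m f _
    haveI : FiniteDimensional (RatFunc k) ↥(FmZ k m f) := QHolAux.FmZ_finiteDimensional m f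
    haveI : FiniteDimensional (RatFunc k) ↥W := hWfd
    haveI : FiniteDimensional (RatFunc k) ↥(FmZ k m f ⊔ W) :=
      Submodule.finiteDimensional_sup _ _
    calc Module.finrank (RatFunc k) ↥(FmZ k m f')
        ≤ Module.finrank (RatFunc k) ↥(FmZ k m f ⊔ W) := Submodule.finrank_mono hle
      _ ≤ Module.finrank (RatFunc k) ↥(FmZ k m f) + Module.finrank (RatFunc k) ↥W :=
          Submodule.finrank_add_le_finrank_add_finrank _ _
      _ ≤ C * (m+1)^(r+1) + hfin.toFinset.card * (m+1)^(r+1) :=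
          Nat.add_le_add (hC m) hWrank
      _ = (C + hfin.toFinset.card) * (m+1)^(r+1) := (Nat.add_mul _ _ _).symm
  · -- part (b)
    intro f f' g a hf hg hoff hon
    obtain ⟨-, Cf, hCf⟩ := hf
    obtain ⟨-, Cg, hCg⟩ := hg
    refine ⟨fun m => QHolAux.FmZ_finiteDimensional m f', ?_⟩
    classical
    refine ⟨Cf + (Cg + Cf * (3^(r+1) + 4^(r+1))), fun m => ?_⟩
    set h0 : (Fin r → ℤ) → V := fun n => g n - f (Fin.snoc n a) with hh0
    have hf'eq : f' = fun n =>
        f n + (if n (Fin.last r) = a then h0 (fun i => n (Fin.castSucc i)) else 0) := by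
      funext n
      have hsnoc : Fin.snoc (Fin.init n) (n (Fin.last r)) = n := Fin.snoc_init_self n
      by_cases ht : n (Fin.last r) = a
      · rw [if_pos ht]
        simp only [hh0]
        have h2 : f' n = g (fun i => n (Fin.castSucc i)) := by
          conv_lhs => rw [← hsnoc, ht]
          exact hon (Fin.init n)
        have h3 : f (Fin.snoc (fun i => n (Fin.castSucc i)) a) = f n := by
          conv_rhs => rw [← hsnoc, ht]
          rfl
        rw [h2, h3]
        abel
      · rw [if_neg ht, add_zero]
        conv_lhs => rw [← hsnoc]
        conv_rhs => rw [← hsnoc]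
        exact hoff (Fin.init n) (n (Fin.last r)) ht
    have hrestr : Module.finrank (RatFunc k) ↥(FmZ k m (fun n => f (Fin.snoc n a)))
        ≤ (Cf * (3^(r+1) + 4^(r+1))) * (m+1)^r := QHolAux.restr_bound a f Cf hCf m
    have hh0le : FmZ k m h0 ≤ FmZ k m g ⊔ FmZ k m (fun n => f (Fin.snoc n a)) := by
      rw [hh0]
      exact QHolAux.FmZ_sub_le m g (fun n => f (Fin.snoc n a))
    haveI : FiniteDimensional (RatFunc k) ↥(FmZ k m g) := QHolAux.FmZ_finiteDimensional m g
    haveI : FiniteDimensional (RatFunc k) ↥(FmZ k m (fun n => f (Fin.snoc n a))) :=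
      QHolAux.FmZ_finiteDimensional m _
    haveI : FiniteDimensional (RatFunc k)
        ↥(FmZ k m g ⊔ FmZ k m (fun n => f (Fin.snoc n a))) :=
      Submodule.finiteDimensional_sup _ _
    have hb0 : Module.finrank (RatFunc k) ↥(FmZ k m h0)
        ≤ (Cg + Cf * (3^(r+1) + 4^(r+1))) * (m+1)^r := by
      calc Module.finrank (RatFunc k) ↥(FmZ k m h0)
          ≤ Module.finrank (RatFunc k) ↥(FmZ k m g ⊔ FmZ k m (fun n => f (Fin.snoc n a))) :=
            Submodule.finrank_mono hh0le
        _ ≤ Module.finrank (RatFunc k) ↥(FmZ k m g)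
              + Module.finrank (RatFunc k) ↥(FmZ k m (fun n => f (Fin.snoc n a))) :=
            Submodule.finrank_add_le_finrank_add_finrank _ _
        _ ≤ Cg * (m+1)^r + (Cf * (3^(r+1) + 4^(r+1))) * (m+1)^r :=
            Nat.add_le_add (hCg m) hrestr
        _ = (Cg + Cf * (3^(r+1) + 4^(r+1))) * (m+1)^r := (Nat.add_mul _ _ _).symm
    have hbE : Module.finrank (RatFunc k)
        ↥(FmZ k m (fun n => if n (Fin.last r) = a then h0 (fun i => n (Fin.castSucc i)) else 0))
        ≤ (m+1) * Module.finrank (RatFunc k) ↥(FmZ k m h0) := QHolAux.finrank_FmZ_ext_le a h0 m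
    have hle2 : FmZ k m f' ≤ FmZ k m f ⊔
        FmZ k m (fun n => if n (Fin.last r) = a then h0 (fun i => n (Fin.castSucc i)) else 0) := by
      conv_lhs => rw [hf'eq]
      exact QHolAux.FmZ_add_le m f _
    haveI : FiniteDimensional (RatFunc k) ↥(FmZ k m f) := QHolAux.FmZ_finiteDimensional m f
    haveI : FiniteDimensional (RatFunc k)
        ↥(FmZ k m (fun n => if n (Fin.last r) = a then h0 (fun i => n (Fin.castSucc i)) else 0)) :=
      QHolAux.FmZ_finiteDimensional m _
    haveI : FiniteDimensional (RatFunc k) ↥(FmZ k m f ⊔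
        FmZ k m (fun n => if n (Fin.last r) = a then h0 (fun i => n (Fin.castSucc i)) else 0)) :=
      Submodule.finiteDimensional_sup _ _
    calc Module.finrank (RatFunc k) ↥(FmZ k m f')
        ≤ Module.finrank (RatFunc k) ↥(FmZ k m f ⊔
            FmZ k m (fun n => if n (Fin.last r) = a
              then h0 (fun i => n (Fin.castSucc i)) else 0)) :=
          Submodule.finrank_mono hle2
      _ ≤ Module.finrank (RatFunc k) ↥(FmZ k m f) + Module.finrank (RatFunc k)
            ↥(FmZ k m (fun n => if n (Fin.last r) = a
              then h0 (fun i => n (Fin.castSucc i)) else 0)) :=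
          Submodule.finrank_add_le_finrank_add_finrank _ _
      _ ≤ Cf * (m+1)^(r+1) + (m+1) * ((Cg + Cf * (3^(r+1) + 4^(r+1))) * (m+1)^r) :=
          Nat.add_le_add (hCf m) (le_trans hbE (Nat.mul_le_mul_left _ hb0))
      _ = (Cf + (Cg + Cf * (3^(r+1) + 4^(r+1)))) * (m+1)^(r+1) := by
          rw [pow_succ]; ring
end
end

section
/- The q-Pochhammer function and the q-binomial coefficient are q-holonomic in both variables (Lemma 6.2(a)): both F and G are q-holonomic functions ℤ² → ℚ(q). (For n ≥ k ≥ 0, G(n,k) equals the q-binomial coefficient (q;q)_n/((q;q)_k (q;q)_{n−k}).) -/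
open scoped BigOperators

noncomputable section

/-- The q-Pochhammer symbol `(q^n; q^{-1})_m = Π_{j=0}^{m-1} (1 - q^{n-j}) ∈ ℚ(q)`. -/
def qPochDesc (n : ℤ) (m : ℕ) : RatFunc ℚ :=
  ∏ j ∈ Finset.range m, (1 - (RatFunc.X : RatFunc ℚ) ^ (n - (j : ℤ)))

/-- `F(n,k) = (q^n; q^{-1})_k` for `k ≥ 0` and `0` for `k < 0`. -/
def Ffun : (Fin 2 → ℤ) → RatFunc ℚ := fun p =>
  if 0 ≤ p 1 then qPochDesc (p 0) (p 1).toNat else 0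

/-- `G(n,k) = (q^n; q^{-1})_k / (q^k; q^{-1})_k` for `k ≥ 0` and `0` for `k < 0`;
for `n ≥ k ≥ 0` this is the q-binomial coefficient. -/
def Gfun : (Fin 2 → ℤ) → RatFunc ℚ := fun p =>
  if 0 ≤ p 1 then qPochDesc (p 0) (p 1).toNat / qPochDesc (p 1) (p 1).toNat else 0

/-!
Both `F` and `G` satisfy three first-order q-difference equations valid on all of `ℤ²`: one in
`n`, one in `k`, and a mixed one (for `G` the q-Pascal rule). Write `[a, b; c, d]` for
`M^(a, b) L^(c, d) f`. Each equation is a linear relation expressing one `[a, b; c, d]` through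
others of no larger order `a + b + c + d` and smaller weight `b + 2 c + d`, and since the
operators `M^α L^β` act linearly and q-commute, so are all its translates. Descending on the
weight, every `[a, b; c, d]` of order `≤ m` lies in the span of those with `b, c ≤ 1`, with
`c = d = 0`, or with `b = d = 0`, and there are at most `6 (m + 1)^2` of these.
-/

namespace QHolonomic

open Submodule Finset

abbrev Idx (r : ℕ) := (Fin r → ℕ) × (Fin r → ℕ)

section General

variable {k : Type} [Field k] {V : Type} [AddCommGroup V] [Module (RatFunc k) V] {r : ℕ}

variable (k) in
def shiftPair (f : (Fin r → ℤ) → V) (p : Idx r) : (Fin r → ℤ) → V :=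
  shiftZ k p.1 p.2 f

def degree (p : Idx r) : ℕ := (∑ i, p.1 i) + ∑ i, p.2 i

theorem degree_add (p p' : Idx r) : degree (p + p') = degree p + degree p' := by
  simp only [degree, Prod.fst_add, Prod.snd_add, Pi.add_apply, sum_add_distrib]
  ring

variable (k) in
def shiftZLinearMap (α β : Fin r → ℕ) :
    ((Fin r → ℤ) → V) →ₗ[RatFunc k] ((Fin r → ℤ) → V) where
  toFun := shiftZ k α β
  map_add' f g := by funext n; simp [shiftZ]
  map_smul' c f := by funext n; simp [shiftZ, smul_comm c]

theorem shiftZ_shiftZ (α β α' β' : Fin r → ℕ) (f : (Fin r → ℤ) → V) :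
    shiftZ k α β (shiftZ k α' β' f) =
      ((RatFunc.X : RatFunc k) ^ (∑ i, (α' i : ℤ) * β i)) •
        shiftZ k (α + α') (β + β') f := by
  funext n
  simp only [shiftZ, Pi.smul_apply, smul_smul, ← zpow_add₀ (RatFunc.X_ne_zero (K := k)),
    Pi.add_apply, Nat.cast_add, add_assoc]
  congr 2
  simp only [mul_add, add_mul, sum_add_distrib]
  ring

theorem shiftPair_add_mem_span {f : (Fin r → ℤ) → V} {p₀ : Idx r} {s : Set (Idx r)}
    (h : shiftPair k f p₀ ∈ span (RatFunc k) (shiftPair k f '' s)) (p : Idx r) :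
    shiftPair k f (p + p₀) ∈ span (RatFunc k) (shiftPair k f '' ((p + ·) '' s)) := by
  have hT (p' : Idx r) : shiftZLinearMap k p.1 p.2 (shiftPair k f p') =
      ((RatFunc.X : RatFunc k) ^ (∑ i, (p'.1 i : ℤ) * p.2 i)) • shiftPair k f (p + p') :=
    shiftZ_shiftZ _ _ _ _ f
  have h' := apply_mem_span_image_of_mem_span (shiftZLinearMap k p.1 p.2) h
  rw [hT, smul_mem_iff _ (zpow_ne_zero _ (RatFunc.X_ne_zero (K := k)))] at h'
  refine span_le.2 ?_ h'
  rintro _ ⟨_, ⟨p', hp', rfl⟩, rfl⟩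
  rw [hT]
  exact smul_mem _ _ (subset_span ⟨p + p', ⟨p', hp', rfl⟩, rfl⟩)

theorem isQHolonomicZ_of_mem_span {f : (Fin r → ℤ) → V} (C : ℕ) (s : ℕ → Finset (Idx r))
    (hcard : ∀ m, #(s m) ≤ C * (m + 1) ^ r)
    (hs : ∀ m p, degree p ≤ m →
      shiftPair k f p ∈ span (RatFunc k) (shiftPair k f '' ↑(s m))) :
    IsQHolonomicZ k f := by
  classical
  have hle (m : ℕ) : FmZ k m f ≤ span (RatFunc k) ((s m).image (shiftPair k f) : Set _) := by
    rw [coe_image]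
    refine span_le.2 ?_
    rintro _ ⟨α, β, hdeg, rfl⟩
    exact hs m (α, β) hdeg
  refine ⟨fun m => finiteDimensional_of_le (hle m), C, fun m => ?_⟩
  have hspan := finrank_span_finset_le_card (R := RatFunc k) ((s m).image (shiftPair k f))
  exact (finrank_mono (hle m)).trans ((hspan.trans card_image_le).trans (hcard m))

def box (u v : Fin r → ℕ) : Finset (Idx r) :=
  Fintype.piFinset (fun i => range (u i)) ×ˢ Fintype.piFinset (fun i => range (v i))

theorem mem_box {u v : Fin r → ℕ} {p : Idx r} :
    p ∈ box u v ↔ (∀ i, p.1 i < u i) ∧ ∀ i, p.2 i < v i := by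
  simp [box]

theorem card_box (u v : Fin r → ℕ) : #(box u v) = (∏ i, u i) * ∏ i, v i := by
  simp [box]

end General

section TwoVariables

variable {k : Type} [Field k] {V : Type} [AddCommGroup V] [Module (RatFunc k) V]

def weight (p : Idx 2) : ℕ := p.1 1 + 2 * p.2 0 + p.2 1

theorem weight_add (p p' : Idx 2) : weight (p + p') = weight p + weight p' := by
  simp only [weight, Prod.fst_add, Prod.snd_add, Pi.add_apply]
  ring

variable (k) in
def spanBelow (f : (Fin 2 → ℤ) → V) (p : Idx 2) :
    Submodule (RatFunc k) ((Fin 2 → ℤ) → V) :=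
  span (RatFunc k) (shiftPair k f '' {p' | degree p' ≤ degree p ∧ weight p' < weight p})

theorem shiftPair_mem_spanBelow {f : (Fin 2 → ℤ) → V} {p p' : Idx 2}
    (hdeg : degree p' ≤ degree p) (hwt : weight p' < weight p) :
    shiftPair k f p' ∈ spanBelow k f p :=
  subset_span ⟨p', ⟨hdeg, hwt⟩, rfl⟩

theorem shiftPair_mem_spanBelow_of_le {f : (Fin 2 → ℤ) → V} {p₀ p : Idx 2}
    (h₀ : shiftPair k f p₀ ∈ spanBelow k f p₀) (hp : p₀ ≤ p) :
    shiftPair k f p ∈ spanBelow k f p := by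
  rw [← tsub_add_cancel_of_le hp]
  refine span_mono ?_ (shiftPair_add_mem_span h₀ (p - p₀))
  rintro _ ⟨_, ⟨p', ⟨hdeg, hwt⟩, rfl⟩, rfl⟩
  refine ⟨p - p₀ + p', ⟨?_, ?_⟩, rfl⟩
  · simp only [degree_add]; omega
  · simp only [weight_add]; omega

theorem shiftPair_two_apply (f : (Fin 2 → ℤ) → V) (a b c d : ℕ) (n : Fin 2 → ℤ) :
    shiftPair k f (![a, b], ![c, d]) n =
      (((RatFunc.X : RatFunc k) ^ n 0) ^ a * (RatFunc.X ^ n 1) ^ b) • f ![n 0 + c, n 1 + d] := by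
  simp only [shiftPair, shiftZ, Fin.sum_univ_two, Matrix.cons_val_zero, Matrix.cons_val_one,
    zpow_add₀ (RatFunc.X_ne_zero (K := k)), mul_comm (_ : ℤ) (n _), zpow_mul, zpow_natCast]
  congr 2
  funext i
  fin_cases i <;> rfl

def basicIdx (m : ℕ) : Finset (Idx 2) :=
  box ![m + 1, 2] ![2, m + 1] ∪ box ![m + 1, m + 1] ![1, 1] ∪ box ![m + 1, 1] ![m + 1, 1]

theorem card_basicIdx_le (m : ℕ) : #(basicIdx m) ≤ 6 * (m + 1) ^ 2 := by
  refine (card_union_le _ _).trans ((Nat.add_le_add_right (card_union_le _ _) _).trans ?_)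
  simp only [card_box, Fin.prod_univ_two, Matrix.cons_val_zero, Matrix.cons_val_one]
  nlinarith

theorem mem_basicIdx {m : ℕ} {p : Idx 2} (hdeg : degree p ≤ m)
    (h₁ : ¬ (![0, 1], ![1, 0]) ≤ p) (h₂ : ¬ (![0, 2], ![0, 1]) ≤ p)
    (h₃ : ¬ (![0, 0], ![2, 1]) ≤ p) : p ∈ basicIdx m := by
  simp only [degree, Fin.sum_univ_two] at hdeg
  simp only [Prod.le_def, Pi.le_def, Fin.forall_fin_two, Matrix.cons_val_zero,
    Matrix.cons_val_one] at h₁ h₂ h₃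
  simp only [basicIdx, mem_union, mem_box, Fin.forall_fin_two, Matrix.cons_val_zero,
    Matrix.cons_val_one]
  omega

theorem shiftPair_mem_span_basicIdx {f : (Fin 2 → ℤ) → V}
    (h₁ : shiftPair k f (![0, 1], ![1, 0]) ∈ spanBelow k f (![0, 1], ![1, 0]))
    (h₂ : shiftPair k f (![0, 2], ![0, 1]) ∈ spanBelow k f (![0, 2], ![0, 1]))
    (h₃ : shiftPair k f (![0, 0], ![2, 1]) ∈ spanBelow k f (![0, 0], ![2, 1]))
    {m : ℕ} (p : Idx 2) (hp : degree p ≤ m) :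
    shiftPair k f p ∈ span (RatFunc k) (shiftPair k f '' ↑(basicIdx m)) := by
  by_cases hred : shiftPair k f p ∈ spanBelow k f p
  · refine span_le.2 ?_ hred
    rintro _ ⟨p', ⟨hdeg, hwt⟩, rfl⟩
    exact shiftPair_mem_span_basicIdx h₁ h₂ h₃ p' (hdeg.trans hp)
  · refine subset_span ⟨p, mem_basicIdx hp ?_ ?_ ?_, rfl⟩
    exacts [fun hle => hred (shiftPair_mem_spanBelow_of_le h₁ hle),
      fun hle => hred (shiftPair_mem_spanBelow_of_le h₂ hle),
      fun hle => hred (shiftPair_mem_spanBelow_of_le h₃ hle)]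
termination_by weight p
decreasing_by exact hwt

theorem isQHolonomicZ_of_mem_spanBelow {f : (Fin 2 → ℤ) → V}
    (h₁ : shiftPair k f (![0, 1], ![1, 0]) ∈ spanBelow k f (![0, 1], ![1, 0]))
    (h₂ : shiftPair k f (![0, 2], ![0, 1]) ∈ spanBelow k f (![0, 2], ![0, 1]))
    (h₃ : shiftPair k f (![0, 0], ![2, 1]) ∈ spanBelow k f (![0, 0], ![2, 1])) :
    IsQHolonomicZ k f :=
  isQHolonomicZ_of_mem_span 6 basicIdx card_basicIdx_le fun _ =>
    shiftPair_mem_span_basicIdx h₁ h₂ h₃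

end TwoVariables

local notation "q" => (RatFunc.X : RatFunc ℚ)

theorem X_pow_ne_one {K : Type} [Field K] {n : ℕ} (hn : n ≠ 0) :
    (RatFunc.X : RatFunc K) ^ n ≠ 1 := by
  intro h
  have := congrArg RatFunc.intDegree h
  rw [← RatFunc.algebraMap_X, ← map_pow, RatFunc.intDegree_polynomial, RatFunc.intDegree_one,
    Polynomial.natDegree_X_pow] at this
  omega

theorem qPochDesc_succ (N : ℤ) (j : ℕ) :
    q ^ j * qPochDesc N (j + 1) = (q ^ j - q ^ N) * qPochDesc N j := by
  rw [qPochDesc, prod_range_succ, zpow_sub₀ RatFunc.X_ne_zero, zpow_natCast, ← qPochDesc]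
  field_simp [pow_ne_zero j (RatFunc.X_ne_zero (K := ℚ))]

theorem qPochDesc_add_one_succ (N : ℤ) (j : ℕ) :
    qPochDesc (N + 1) (j + 1) = (1 - q * q ^ N) * qPochDesc N j := by
  rw [qPochDesc, prod_range_succ', mul_comm, Nat.cast_zero, sub_zero,
    zpow_add_one₀ RatFunc.X_ne_zero, mul_comm (q ^ N)]
  congr 1
  refine prod_congr rfl fun i _ => ?_
  push_cast
  ring_nf

theorem qPochDesc_self_ne_zero (j : ℕ) : qPochDesc j j ≠ 0 := by
  refine prod_ne_zero_iff.2 fun i hi => sub_ne_zero.2 (Ne.symm ?_)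
  rw [mem_range] at hi
  rw [← Nat.cast_sub hi.le, zpow_natCast]
  exact X_pow_ne_one (by omega)

theorem Ffun_natCast (N : ℤ) (j : ℕ) : Ffun ![N, j] = qPochDesc N j := by
  simp [Ffun]

theorem Ffun_of_neg (N : ℤ) {K : ℤ} (hK : K < 0) : Ffun ![N, K] = 0 := by
  simp [Ffun, hK.not_ge]

theorem Gfun_natCast (N : ℤ) (j : ℕ) : Gfun ![N, j] = qPochDesc N j / qPochDesc j j := by
  simp [Gfun]

theorem Gfun_natCast_succ (N : ℤ) (j : ℕ) :
    Gfun ![N, j + 1] = qPochDesc N (j + 1) / ((1 - q ^ (j + 1)) * qPochDesc j j) := by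
  rw [← Nat.cast_succ, Gfun_natCast, Nat.cast_succ, qPochDesc_add_one_succ, zpow_natCast,
    pow_succ']

theorem Gfun_of_neg (N : ℤ) {K : ℤ} (hK : K < 0) : Gfun ![N, K] = 0 := by
  simp [Gfun, hK.not_ge]

theorem one_sub_X_pow_succ_ne_zero (j : ℕ) : 1 - q ^ (j + 1) ≠ 0 :=
  sub_ne_zero.2 (X_pow_ne_one (Nat.succ_ne_zero j)).symm

theorem Ffun_rec_left (N K : ℤ) :
    (q ^ K - q * q ^ N) * Ffun ![N + 1, K] = (q ^ K - q * q ^ N * q ^ K) * Ffun ![N, K] := by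
  rcases lt_or_ge K 0 with hK | hK
  · simp [Ffun_of_neg _ hK]
  lift K to ℕ using hK with j
  have h := qPochDesc_succ (N + 1) j
  rw [zpow_add_one₀ RatFunc.X_ne_zero, mul_comm _ q] at h
  simp only [Ffun_natCast, zpow_natCast]
  linear_combination -h + q ^ j * qPochDesc_add_one_succ N j

/-- The factor `q * q ^ K - 1` kills the case `K = -1`, where `Ffun` jumps from `0` to `1`. -/
theorem Ffun_rec_right (N K : ℤ) :
    q ^ K * (q * q ^ K - 1) * Ffun ![N, K + 1] =
      (q * q ^ K - 1) * (q ^ K - q ^ N) * Ffun ![N, K] := by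
  rcases lt_trichotomy K (-1) with hK | rfl | hK
  · simp [Ffun_of_neg _ (show K < 0 by omega), Ffun_of_neg _ (show K + 1 < 0 by omega)]
  · simp [Ffun_of_neg _ (show (-1 : ℤ) < 0 by omega), RatFunc.X_ne_zero]
  lift K to ℕ using (show 0 ≤ K by omega) with j
  rw [← Nat.cast_succ, Ffun_natCast, Ffun_natCast, zpow_natCast]
  linear_combination (q * q ^ j - 1) * qPochDesc_succ N j

/-- The difference of two instances of `F(n + 1, k + 1) = (1 - q^(n+1)) F(n, k)`, which fails
at `k = -1` while the difference does not. -/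
theorem Ffun_rec_diag (N K : ℤ) :
    Ffun ![N + 2, K + 1] - Ffun ![N + 1, K + 1] =
      (1 - q ^ 2 * q ^ N) * Ffun ![N + 1, K] - (1 - q * q ^ N) * Ffun ![N, K] := by
  rcases lt_trichotomy K (-1) with hK | rfl | hK
  · simp [Ffun_of_neg _ (show K < 0 by omega), Ffun_of_neg _ (show K + 1 < 0 by omega)]
  · simp [Ffun, qPochDesc]
  lift K to ℕ using (show 0 ≤ K by omega) with j
  rw [← Nat.cast_succ, Ffun_natCast, Ffun_natCast, Ffun_natCast, Ffun_natCast,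
    show N + 2 = N + 1 + 1 by ring, qPochDesc_add_one_succ, qPochDesc_add_one_succ,
    zpow_add_one₀ RatFunc.X_ne_zero]
  ring

theorem Gfun_rec_left (N K : ℤ) :
    (q ^ K - q * q ^ N) * Gfun ![N + 1, K] = (q ^ K - q * q ^ N * q ^ K) * Gfun ![N, K] := by
  rcases lt_or_ge K 0 with hK | hK
  · simp [Gfun_of_neg _ hK]
  lift K to ℕ using hK with j
  have h := Ffun_rec_left N j
  simp only [Ffun_natCast] at h
  simp only [Gfun_natCast, mul_div_assoc', h]

theorem Gfun_rec_right (N K : ℤ) :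
    q ^ K * (q * q ^ K - 1) * Gfun ![N, K + 1] = (q ^ N - q ^ K) * Gfun ![N, K] := by
  rcases lt_trichotomy K (-1) with hK | rfl | hK
  · simp [Gfun_of_neg _ (show K < 0 by omega), Gfun_of_neg _ (show K + 1 < 0 by omega)]
  · simp [Gfun_of_neg _ (show (-1 : ℤ) < 0 by omega), RatFunc.X_ne_zero]
  lift K to ℕ using (show 0 ≤ K by omega) with j
  have hC := qPochDesc_self_ne_zero j
  have hq := one_sub_X_pow_succ_ne_zero j
  rw [Gfun_natCast_succ, Gfun_natCast, zpow_natCast, ← pow_succ']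
  field_simp
  linear_combination (q * q ^ j - 1) * qPochDesc_succ N j

theorem Gfun_pascal (N K : ℤ) :
    Gfun ![N + 1, K + 1] = Gfun ![N, K] + q * q ^ K * Gfun ![N, K + 1] := by
  rcases lt_trichotomy K (-1) with hK | rfl | hK
  · simp [Gfun_of_neg _ (show K < 0 by omega), Gfun_of_neg _ (show K + 1 < 0 by omega)]
  · simp [Gfun, qPochDesc, RatFunc.X_ne_zero]
  lift K to ℕ using (show 0 ≤ K by omega) with j
  have hC := qPochDesc_self_ne_zero j
  have hq := one_sub_X_pow_succ_ne_zero j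
  rw [Gfun_natCast_succ, Gfun_natCast_succ, Gfun_natCast, qPochDesc_add_one_succ, zpow_natCast,
    ← pow_succ']
  field_simp
  linear_combination -q * qPochDesc_succ N j

theorem Ffun_shiftPair_mem_spanBelow₁ :
    shiftPair ℚ Ffun (![0, 1], ![1, 0]) ∈ spanBelow ℚ Ffun (![0, 1], ![1, 0]) := by
  have h : shiftPair ℚ Ffun (![0, 1], ![1, 0]) =
      q • shiftPair ℚ Ffun (![1, 0], ![1, 0]) + shiftPair ℚ Ffun (![0, 1], ![0, 0]) -
        q • shiftPair ℚ Ffun (![1, 1], ![0, 0]) := by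
    funext n
    simp only [Pi.add_apply, Pi.sub_apply, Pi.smul_apply, shiftPair_two_apply, smul_eq_mul,
      Nat.cast_zero, Nat.cast_one, add_zero, pow_zero, pow_one, one_mul, mul_one]
    linear_combination Ffun_rec_left (n 0) (n 1)
  rw [h]
  apply_rules [add_mem, sub_mem, Submodule.smul_mem, shiftPair_mem_spanBelow] <;>
    simp [degree, weight]

theorem Ffun_shiftPair_mem_spanBelow₂ :
    shiftPair ℚ Ffun (![0, 2], ![0, 1]) ∈ spanBelow ℚ Ffun (![0, 2], ![0, 1]) := by
  have h : q • shiftPair ℚ Ffun (![0, 2], ![0, 1]) =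
      shiftPair ℚ Ffun (![0, 1], ![0, 1]) + q • shiftPair ℚ Ffun (![0, 2], ![0, 0]) -
        q • shiftPair ℚ Ffun (![1, 1], ![0, 0]) - shiftPair ℚ Ffun (![0, 1], ![0, 0]) +
        shiftPair ℚ Ffun (![1, 0], ![0, 0]) := by
    funext n
    simp only [Pi.add_apply, Pi.sub_apply, Pi.smul_apply, shiftPair_two_apply, smul_eq_mul,
      Nat.cast_zero, Nat.cast_one, add_zero, pow_zero, pow_one, one_mul, mul_one]
    linear_combination Ffun_rec_right (n 0) (n 1)
  rw [← smul_mem_iff _ (RatFunc.X_ne_zero (K := ℚ)), h]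
  apply_rules [add_mem, sub_mem, Submodule.smul_mem, shiftPair_mem_spanBelow] <;>
    simp [degree, weight]

theorem Ffun_shiftPair_mem_spanBelow₃ :
    shiftPair ℚ Ffun (![0, 0], ![2, 1]) ∈ spanBelow ℚ Ffun (![0, 0], ![2, 1]) := by
  have h : shiftPair ℚ Ffun (![0, 0], ![2, 1]) =
      shiftPair ℚ Ffun (![0, 0], ![1, 1]) + shiftPair ℚ Ffun (![0, 0], ![1, 0]) -
        q ^ 2 • shiftPair ℚ Ffun (![1, 0], ![1, 0]) - shiftPair ℚ Ffun (![0, 0], ![0, 0]) +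
        q • shiftPair ℚ Ffun (![1, 0], ![0, 0]) := by
    funext n
    simp only [Pi.add_apply, Pi.sub_apply, Pi.smul_apply, shiftPair_two_apply, smul_eq_mul,
      Nat.cast_zero, Nat.cast_one, Nat.cast_ofNat, add_zero, pow_zero, pow_one, one_mul, mul_one]
    linear_combination Ffun_rec_diag (n 0) (n 1)
  rw [h]
  apply_rules [add_mem, sub_mem, Submodule.smul_mem, shiftPair_mem_spanBelow] <;>
    simp [degree, weight]

theorem Gfun_shiftPair_mem_spanBelow₁ :
    shiftPair ℚ Gfun (![0, 1], ![1, 0]) ∈ spanBelow ℚ Gfun (![0, 1], ![1, 0]) := by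
  have h : shiftPair ℚ Gfun (![0, 1], ![1, 0]) =
      q • shiftPair ℚ Gfun (![1, 0], ![1, 0]) + shiftPair ℚ Gfun (![0, 1], ![0, 0]) -
        q • shiftPair ℚ Gfun (![1, 1], ![0, 0]) := by
    funext n
    simp only [Pi.add_apply, Pi.sub_apply, Pi.smul_apply, shiftPair_two_apply, smul_eq_mul,
      Nat.cast_zero, Nat.cast_one, add_zero, pow_zero, pow_one, one_mul, mul_one]
    linear_combination Gfun_rec_left (n 0) (n 1)
  rw [h]
  apply_rules [add_mem, sub_mem, Submodule.smul_mem, shiftPair_mem_spanBelow] <;>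
    simp [degree, weight]

theorem Gfun_shiftPair_mem_spanBelow₂ :
    shiftPair ℚ Gfun (![0, 2], ![0, 1]) ∈ spanBelow ℚ Gfun (![0, 2], ![0, 1]) := by
  have h : q • shiftPair ℚ Gfun (![0, 2], ![0, 1]) =
      shiftPair ℚ Gfun (![0, 1], ![0, 1]) + shiftPair ℚ Gfun (![1, 0], ![0, 0]) -
        shiftPair ℚ Gfun (![0, 1], ![0, 0]) := by
    funext n
    simp only [Pi.add_apply, Pi.sub_apply, Pi.smul_apply, shiftPair_two_apply, smul_eq_mul,
      Nat.cast_zero, Nat.cast_one, add_zero, pow_zero, pow_one, one_mul, mul_one]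
    linear_combination Gfun_rec_right (n 0) (n 1)
  rw [← smul_mem_iff _ (RatFunc.X_ne_zero (K := ℚ)), h]
  apply_rules [add_mem, sub_mem, Submodule.smul_mem, shiftPair_mem_spanBelow] <;>
    simp [degree, weight]

theorem Gfun_shiftPair_mem_spanBelow₃ :
    shiftPair ℚ Gfun (![0, 0], ![1, 1]) ∈ spanBelow ℚ Gfun (![0, 0], ![1, 1]) := by
  have h : shiftPair ℚ Gfun (![0, 0], ![1, 1]) =
      shiftPair ℚ Gfun (![0, 0], ![0, 0]) + q • shiftPair ℚ Gfun (![0, 1], ![0, 1]) := by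
    funext n
    simp only [Pi.add_apply, Pi.smul_apply, shiftPair_two_apply, smul_eq_mul,
      Nat.cast_zero, Nat.cast_one, add_zero, pow_zero, pow_one, one_mul, mul_one]
    linear_combination Gfun_pascal (n 0) (n 1)
  rw [h]
  apply_rules [add_mem, Submodule.smul_mem, shiftPair_mem_spanBelow] <;>
    simp [degree, weight]

end QHolonomic

open QHolonomic

/-- Lemma 6.2(a): both `F` and `G` are q-holonomic functions `ℤ² → ℚ(q)`. -/
theorem qholonomic_F_and_G : IsQHolonomicZ ℚ Ffun ∧ IsQHolonomicZ ℚ Gfun := by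
  have hGfun₃ := shiftPair_mem_spanBelow_of_le Gfun_shiftPair_mem_spanBelow₃
    (p := (![0, 0], ![2, 1])) (by simp [Prod.le_def, Pi.le_def, Fin.forall_fin_two])
  exact ⟨isQHolonomicZ_of_mem_spanBelow Ffun_shiftPair_mem_spanBelow₁
      Ffun_shiftPair_mem_spanBelow₂ Ffun_shiftPair_mem_spanBelow₃,
    isQHolonomicZ_of_mem_spanBelow Gfun_shiftPair_mem_spanBelow₁
      Gfun_shiftPair_mem_spanBelow₂ hGfun₃⟩
end
end

section
/- The specialized extended q-binomial coefficient is q-holonomic in three variables (Lemma 6.2(c)): the function K : ℤ³ → ℚ(q) is q-holonomic. -/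
open scoped BigOperators

noncomputable section

/-- The function `K : ℤ³ → ℚ(q)`: `K(n,k,ℓ) = 0` for `k < 0` and
`K(n,k,ℓ) = Π_{j=1}^{k} (q^{ℓ+n−j+1} − q^{−ℓ−n+j−1})/(q^j − q^{−j})` for `k ≥ 0`
(the extended q-binomial coefficient with `x = q^ℓ`). -/
def Kfun : (Fin 3 → ℤ) → RatFunc ℚ := fun p =>
  if 0 ≤ p 1 then
    ∏ j ∈ Finset.range (p 1).toNat,
      ((RatFunc.X : RatFunc ℚ) ^ (p 2 + p 0 - (j : ℤ)) -
        (RatFunc.X : RatFunc ℚ) ^ (-(p 2 + p 0 - (j : ℤ)))) /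
      ((RatFunc.X : RatFunc ℚ) ^ ((j : ℤ) + 1) -
        (RatFunc.X : RatFunc ℚ) ^ (-((j : ℤ) + 1)))
  else 0

/-!
Write `x = n + ℓ` and `k` for the second variable, so that `K = qBinom q x k`. We cover `ℤ³` by
`O(m)` regions on each of which every generator `M^α L^β K` of `F_m K` agrees with `P · ψ`, where
`ψ` depends only on the region and `P` lies in the span `L` of the monomials `q^(e·n)` with
`|e_i| ≤ 3m`:
* for `k < -m` all generators vanish;
* on the half-space `k ≥ 0` minus the strip `-m ≤ x - k ≤ -1`, the ratio `K(x+s, k+t) / K(x, k)`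
  (`s, t ≤ m`) becomes a Laurent polynomial after multiplying by a denominator depending only on
  `m`, so `ψ = K / denominator` and the restriction has dimension `O(m³)`;
* on the `O(m)` planes `k = c` (`|c| ≤ m`) and `x - k = d` (`-m ≤ d ≤ -1`), where the latter uses
  the symmetry `K(x, k) = K(x, x - k)`, the shifts of `K` are `q`-binomials with a fixed lower
  index, and on a plane the monomials of `L` span only `O(m²)` dimensions.
A function vanishing on every region is zero, so `dim F_m K` is at most the sum of the dimensions
of its restrictions to the regions, which is `O(m³)`.
-/

open Finset

section Restriction

variable {R V V' : Type*} [Field R] [AddCommGroup V] [Module R V] [AddCommGroup V'] [Module R V']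

theorem Submodule.finrank_le_finrank_map_add_finrank_map (W : Submodule R V)
    [FiniteDimensional R W] (f g : V →ₗ[R] V') (h : ∀ v ∈ W, f v = 0 → g v = 0 → v = 0) :
    Module.finrank R W ≤ Module.finrank R (W.map f) + Module.finrank R (W.map g) := by
  rw [← Module.finrank_prod]
  refine LinearMap.finrank_le_finrank_of_injective
    (f := (f.submoduleMap W).prod (g.submoduleMap W)) ?_
  rw [← LinearMap.ker_eq_bot, LinearMap.ker_eq_bot']
  intro v hv
  obtain ⟨hf, hg⟩ := Prod.ext_iff.mp hv
  exact Subtype.ext (h v v.2 (congrArg Subtype.val hf) (congrArg Subtype.val hg))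

variable {α : Type*}

variable (R) in
def restrictTo (S : Set α) : (α → V) →ₗ[R] (α → V) where
  toFun f := S.indicator f
  map_add' f g := Set.indicator_add' S f g
  map_smul' c f := Set.indicator_const_smul S c f

@[simp] lemma restrictTo_apply (S : Set α) (f : α → V) : restrictTo R S f = S.indicator f := rfl

@[simp] lemma restrictTo_univ :
    restrictTo R (Set.univ : Set α) = (LinearMap.id : (α → V) →ₗ[R] (α → V)) := by
  ext
  simp

lemma restrictTo_comp_restrictTo_of_subset {S T : Set α} (h : S ⊆ T) :
    restrictTo R S ∘ₗ restrictTo R T = (restrictTo R S : (α → V) →ₗ[R] (α → V)) := by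
  ext f : 1
  simp [Set.indicator_indicator, Set.inter_eq_left.mpr h]

variable (W : Submodule R (α → V)) [FiniteDimensional R W]

lemma finrank_map_restrictTo_union_le (S T : Set α) :
    Module.finrank R (W.map (restrictTo R (S ∪ T))) ≤
      Module.finrank R (W.map (restrictTo R S)) + Module.finrank R (W.map (restrictTo R T)) := by
  have key := (W.map (restrictTo R (S ∪ T))).finrank_le_finrank_map_add_finrank_map
    (restrictTo R S) (restrictTo R T) ?_
  · rwa [← Submodule.map_comp, ← Submodule.map_comp,
      restrictTo_comp_restrictTo_of_subset Set.subset_union_left,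
      restrictTo_comp_restrictTo_of_subset Set.subset_union_right] at key
  · rintro _ ⟨v, -, rfl⟩ hS hT
    ext a
    have hSa := congrFun hS a
    have hTa := congrFun hT a
    by_cases haS : a ∈ S <;> by_cases haT : a ∈ T <;> simp_all

lemma finrank_map_restrictTo_biUnion_le {ι : Type*} (s : Finset ι) (S : ι → Set α) :
    Module.finrank R (W.map (restrictTo R (⋃ i ∈ s, S i))) ≤
      ∑ i ∈ s, Module.finrank R (W.map (restrictTo R (S i))) := by
  classical
  induction s using Finset.induction_on with
  | empty =>
    have : restrictTo R (∅ : Set α) = (0 : (α → V) →ₗ[R] (α → V)) := by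
      ext
      simp
    simp [this]
  | insert i s hi ih =>
    rw [Finset.set_biUnion_insert, Finset.sum_insert hi]
    exact (finrank_map_restrictTo_union_le W _ _).trans (by gcongr)

end Restriction

section QBinomial

variable {F : Type*} [Field F] (q : F)

def qNum (z : ℤ) : F := q ^ z - q ^ (-z)

def qFall (x : ℤ) (a : ℕ) : F := ∏ j ∈ range a, qNum q (x - j)

def qFact (a : ℕ) : F := ∏ j ∈ range a, qNum q (j + 1)

def qBinom (x k : ℤ) : F := if 0 ≤ k then qFall q x k.toNat / qFact q k.toNat else 0

/-- A common denominator of the ratios `qBinom q (x + s) (k + t) / qBinom q x k`, `s, t ≤ m`. -/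
def qBinomRatioDen (m : ℕ) (x k : ℤ) : F :=
  (∏ j ∈ range m, qNum q (k + 1 + j)) * ∏ i ∈ range m, qNum q (x - k + 1 + i)

def qBinomRatioNum (m s t : ℕ) (x k : ℤ) : F :=
  (∏ j ∈ range t, qNum q (x + s - k - j)) * (∏ i ∈ range s, qNum q (x + 1 + i)) *
    (∏ j ∈ range (m - t), qNum q (k + 1 + t + j)) *
      ∏ i ∈ range (m - s), qNum q (x - k + 1 + s + i)

variable {q}

@[simp] lemma qNum_zero : qNum q 0 = 0 := by simp [qNum]

lemma qNum_ne_zero (hq0 : q ≠ 0) (hq : ¬IsOfFinOrder q) {z : ℤ} (hz : z ≠ 0) :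
    qNum q z ≠ 0 := by
  intro h
  apply hq
  refine isOfFinOrder_iff_zpow_eq_one.mpr ⟨z + z, by omega, ?_⟩
  rw [zpow_add₀ hq0]
  nth_rewrite 1 [sub_eq_zero.mp h]
  rw [← zpow_add₀ hq0, neg_add_cancel, zpow_zero]

lemma qFall_add (x : ℤ) (a b : ℕ) : qFall q x (a + b) = qFall q x a * qFall q (x - a) b := by
  simp only [qFall, prod_range_add]
  congr 1
  refine prod_congr rfl fun j _ => ?_
  push_cast
  ring_nf

lemma qFall_self (a : ℕ) : qFall q a a = qFact q a := by
  rw [qFall, qFact, ← prod_range_reflect]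
  refine prod_congr rfl fun j hj => ?_
  rw [show ((a - 1 - j : ℕ) : ℤ) = a - 1 - j by have := mem_range.mp hj; omega]
  ring_nf

lemma qFall_eq_zero {x : ℤ} {a : ℕ} (h0 : 0 ≤ x) (h : x < a) : qFall q x a = 0 :=
  prod_eq_zero (i := x.toNat) (mem_range.mpr (by omega))
    (by rw [Int.toNat_of_nonneg h0, sub_self, qNum_zero])

lemma qFall_succ_left_mul (x : ℤ) (a : ℕ) :
    qFall q (x + 1) a * qNum q (x + 1 - a) = qFall q x a * qNum q (x + 1) := by
  have h := (prod_range_succ (fun j : ℕ => qNum q (x + 1 - j)) a).symm.trans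
    (prod_range_succ' _ a)
  simpa [qFall, add_sub_add_right_eq_sub] using h

lemma qFact_ne_zero (hq0 : q ≠ 0) (hq : ¬IsOfFinOrder q) (a : ℕ) : qFact q a ≠ 0 :=
  prod_ne_zero_iff.mpr fun j _ => qNum_ne_zero hq0 hq (by omega)

lemma qFall_mul_qFact (b c : ℕ) : qFall q (b + c) b * qFact q c = qFact q (b + c) := by
  rw [← qFall_self c, ← qFall_self (b + c), qFall_add]
  push_cast
  ring_nf

lemma qBinom_of_neg {x k : ℤ} (hk : k < 0) : qBinom q x k = 0 := if_neg (by omega)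

lemma qBinom_of_nonneg {x k : ℤ} (hk : 0 ≤ k) :
    qBinom q x k = qFall q x k.toNat / qFact q k.toNat := if_pos hk

lemma qBinom_symm (hq0 : q ≠ 0) (hq : ¬IsOfFinOrder q) {x : ℤ} (hx : 0 ≤ x) (k : ℤ) :
    qBinom q x k = qBinom q x (x - k) := by
  rcases lt_or_ge k 0 with hk | hk
  · rw [qBinom_of_neg hk, qBinom_of_nonneg (by omega), qFall_eq_zero hx (by omega), zero_div]
  rcases lt_or_ge x k with hxk | hxk
  · rw [qBinom_of_nonneg hk, qFall_eq_zero hx (by omega), zero_div, qBinom_of_neg (by omega)]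
  obtain ⟨b, rfl⟩ := Int.eq_ofNat_of_zero_le hk
  obtain ⟨c, rfl⟩ : ∃ c : ℕ, x = b + c := ⟨(x - b).toNat, by omega⟩
  rw [qBinom_of_nonneg hk, qBinom_of_nonneg (by omega), div_eq_div_iff
    (qFact_ne_zero hq0 hq _) (qFact_ne_zero hq0 hq _)]
  simp only [Int.toNat_natCast, add_sub_cancel_left]
  rw [qFall_mul_qFact, add_comm (b : ℤ), qFall_mul_qFact, add_comm]

lemma qBinom_succ_left_mul (x k : ℤ) :
    qBinom q (x + 1) k * qNum q (x + 1 - k) = qBinom q x k * qNum q (x + 1) := by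
  rcases lt_or_ge k 0 with hk | hk
  · simp [qBinom_of_neg hk]
  obtain ⟨a, rfl⟩ := Int.eq_ofNat_of_zero_le hk
  rw [qBinom_of_nonneg hk, qBinom_of_nonneg hk, Int.toNat_natCast, div_mul_eq_mul_div,
    div_mul_eq_mul_div, qFall_succ_left_mul]

lemma qBinom_succ_right_mul (hq0 : q ≠ 0) (hq : ¬IsOfFinOrder q) (x k : ℤ) :
    qBinom q x (k + 1) * qNum q (k + 1) = qBinom q x k * qNum q (x - k) := by
  rcases lt_or_ge k 0 with hk | hk
  · rcases eq_or_lt_of_le (show k + 1 ≤ 0 by omega) with hk1 | hk1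
    · simp [qBinom_of_neg hk, hk1]
    · simp [qBinom_of_neg hk, qBinom_of_neg hk1]
  obtain ⟨a, rfl⟩ := Int.eq_ofNat_of_zero_le hk
  rw [qBinom_of_nonneg hk, qBinom_of_nonneg (by omega), show (a : ℤ) + 1 = (a + 1 : ℕ) by simp,
    Int.toNat_natCast, Int.toNat_natCast, qFall, qFact, prod_range_succ, prod_range_succ,
    ← qFall, ← qFact]
  have := qFact_ne_zero hq0 hq a
  have : qNum q (a + 1) ≠ 0 := qNum_ne_zero hq0 hq (by omega)
  push_cast
  field_simp

lemma qBinom_add_left_mul (x k : ℤ) (s : ℕ) :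
    qBinom q (x + s) k * ∏ i ∈ range s, qNum q (x - k + 1 + i) =
      qBinom q x k * ∏ i ∈ range s, qNum q (x + 1 + i) := by
  induction s with
  | zero => simp
  | succ s ih =>
    have step := qBinom_succ_left_mul (q := q) (x + s) k
    simp only [prod_range_succ, Nat.cast_succ]
    linear_combination (norm := ring_nf) (∏ i ∈ range s, qNum q (x - k + 1 + i)) * step +
      qNum q (x + 1 + s) * ih

lemma qBinom_add_right_mul (hq0 : q ≠ 0) (hq : ¬IsOfFinOrder q) (x k : ℤ) (t : ℕ) :
    qBinom q x (k + t) * ∏ j ∈ range t, qNum q (k + 1 + j) =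
      qBinom q x k * ∏ j ∈ range t, qNum q (x - k - j) := by
  induction t with
  | zero => simp
  | succ t ih =>
    have step := qBinom_succ_right_mul hq0 hq x (k + t)
    simp only [prod_range_succ, Nat.cast_succ]
    linear_combination (norm := ring_nf) (∏ j ∈ range t, qNum q (k + 1 + j)) * step +
      qNum q (x - k - t) * ih

lemma qBinomRatioDen_ne_zero (hq0 : q ≠ 0) (hq : ¬IsOfFinOrder q) {m : ℕ} {x k : ℤ}
    (hk : 0 ≤ k) (hxk : ∀ i < m, x - k + 1 + i ≠ 0) : qBinomRatioDen q m x k ≠ 0 :=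
  mul_ne_zero (prod_ne_zero_iff.mpr fun j _ => qNum_ne_zero hq0 hq (by omega))
    (prod_ne_zero_iff.mpr fun i hi => qNum_ne_zero hq0 hq (hxk i (mem_range.mp hi)))

lemma qBinom_add_add_mul_ratioDen (hq0 : q ≠ 0) (hq : ¬IsOfFinOrder q) (x k : ℤ) {s t m : ℕ}
    (hs : s ≤ m) (ht : t ≤ m) :
    qBinom q (x + s) (k + t) * qBinomRatioDen q m x k =
      qBinom q x k * qBinomRatioNum q m s t x k := by
  have hright := qBinom_add_right_mul hq0 hq (x + s) k t
  have hleft := qBinom_add_left_mul (q := q) x k s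
  have hsplit : ∀ (f : ℕ → F) {a : ℕ}, a ≤ m →
      ∏ j ∈ range m, f j = (∏ j ∈ range a, f j) * ∏ j ∈ range (m - a), f (a + j) :=
    fun f a ha => by rw [← prod_range_add, Nat.add_sub_cancel' ha]
  rw [qBinomRatioDen, qBinomRatioNum, hsplit _ ht, hsplit (fun i => qNum q (x - k + 1 + i)) hs]
  push_cast
  linear_combination (norm := ring_nf)
    (∏ i ∈ range s, qNum q (x - k + 1 + i)) * (∏ j ∈ range (m - t), qNum q (k + 1 + (t + j))) *
      (∏ i ∈ range (m - s), qNum q (x - k + 1 + (s + i))) * hright +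
    (∏ j ∈ range t, qNum q (x + s - k - j)) * (∏ j ∈ range (m - t), qNum q (k + 1 + (t + j))) *
      (∏ i ∈ range (m - s), qNum q (x - k + 1 + (s + i))) * hleft

end QBinomial

section Laurent

variable {F : Type*} [Field F] {r : ℕ} (q : F)

def laurentMono (e : Fin r → ℤ) : (Fin r → ℤ) → F := fun n => q ^ (e ⬝ᵥ n)

variable (r) in
def laurentBox (N : ℕ) : Finset (Fin r → ℤ) := Icc (-(N : Fin r → ℤ)) N

def laurentSpan (N : ℕ) : Submodule F ((Fin r → ℤ) → F) :=
  Submodule.span F (Set.range fun e : laurentBox r N => laurentMono q e)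

lemma mem_laurentBox {N : ℕ} {e : Fin r → ℤ} : e ∈ laurentBox r N ↔ ∀ i, |e i| ≤ N := by
  simp only [laurentBox, mem_Icc, Pi.le_def, abs_le, ← forall_and]
  rfl

lemma card_laurentBox (N : ℕ) : #(laurentBox r N) = (2 * N + 1) ^ r := by
  rw [laurentBox, Pi.card_Icc]
  simp only [Pi.neg_apply, Pi.natCast_apply, Int.card_Icc, prod_const, card_univ, Fintype.card_fin]
  congr 1
  omega

instance (N : ℕ) : FiniteDimensional F (laurentSpan (r := r) q N) :=
  FiniteDimensional.span_of_finite F (Set.finite_range _)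

lemma finrank_laurentSpan_le (N : ℕ) :
    Module.finrank F (laurentSpan (r := r) q N) ≤ (2 * N + 1) ^ r :=
  (finrank_range_le_card _).trans (by simp [card_laurentBox])

variable {q}

lemma laurentMono_add (hq0 : q ≠ 0) (e e' : Fin r → ℤ) :
    laurentMono q (e + e') = laurentMono q e * laurentMono q e' := by
  ext n
  simp [laurentMono, add_dotProduct, zpow_add₀ hq0]

lemma laurentMono_mem {N : ℕ} {e : Fin r → ℤ} (he : ∀ i, |e i| ≤ N) :
    laurentMono q e ∈ laurentSpan q N :=
  Submodule.subset_span ⟨⟨e, mem_laurentBox.mpr he⟩, rfl⟩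

lemma laurentSpan_mono {N N' : ℕ} (h : N ≤ N') :
    laurentSpan (r := r) q N ≤ laurentSpan q N' :=
  Submodule.span_le.mpr <| Set.range_subset_iff.mpr fun e =>
    laurentMono_mem fun i => (mem_laurentBox.mp e.2 i).trans (by exact_mod_cast h)

lemma mul_mem_laurentSpan (hq0 : q ≠ 0) {N N' : ℕ} {P P' : (Fin r → ℤ) → F}
    (hP : P ∈ laurentSpan q N) (hP' : P' ∈ laurentSpan q N') :
    P * P' ∈ laurentSpan q (N + N') := by
  have hmul : laurentSpan q N * laurentSpan q N' ≤ laurentSpan (r := r) q (N + N') := by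
    rw [laurentSpan, laurentSpan, Submodule.span_mul_span, Submodule.span_le]
    rintro _ ⟨_, ⟨⟨e, he⟩, rfl⟩, _, ⟨⟨e', he'⟩, rfl⟩, rfl⟩
    change laurentMono q e * laurentMono q e' ∈ _
    rw [← laurentMono_add hq0]
    refine laurentMono_mem fun i => (abs_add_le _ _).trans ?_
    push_cast
    exact add_le_add (mem_laurentBox.mp he i) (mem_laurentBox.mp he' i)
  exact hmul (Submodule.mul_mem_mul hP hP')

lemma qNum_comp_mem (hq0 : q ≠ 0) {a : Fin r → ℤ} (ha : ∀ i, |a i| ≤ 1) (b : ℤ) :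
    (fun n => qNum q (a ⬝ᵥ n + b)) ∈ laurentSpan q 1 := by
  have h : (fun n => qNum q (a ⬝ᵥ n + b)) =
      q ^ b • laurentMono q a - q ^ (-b) • laurentMono q (-a) := by
    ext n
    simp only [qNum, laurentMono, neg_dotProduct, Pi.sub_apply, Pi.smul_apply, smul_eq_mul,
      neg_add, zpow_add₀ hq0]
    ring
  rw [h]
  exact Submodule.sub_mem _ (Submodule.smul_mem _ _ (laurentMono_mem (by simpa using ha)))
    (Submodule.smul_mem _ _ (laurentMono_mem (by simpa using ha)))

lemma prod_qNum_mem (hq0 : q ≠ 0) {a : Fin r → ℤ} (ha : ∀ i, |a i| ≤ 1) {b : ℕ → ℤ}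
    {g : (Fin r → ℤ) → ℕ → ℤ} (hg : ∀ n j, g n j = a ⬝ᵥ n + b j) (s : ℕ) :
    (fun n => ∏ j ∈ range s, qNum q (g n j)) ∈ laurentSpan q s := by
  simp only [hg]
  induction s with
  | zero =>
    convert laurentMono_mem (q := q) (e := 0) (N := 0) (by simp) using 1
    ext
    simp [laurentMono]
  | succ s ih =>
    simp only [prod_range_succ]
    exact mul_mem_laurentSpan hq0 ih (qNum_comp_mem hq0 ha (b s))

lemma qBinom_mem (hq0 : q ≠ 0) {a : Fin r → ℤ} (ha : ∀ i, |a i| ≤ 1) {b : ℤ}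
    {g : (Fin r → ℤ) → ℤ} (hg : ∀ n, g n = a ⬝ᵥ n + b) (k : ℤ) :
    (fun n => qBinom q (g n) k) ∈ laurentSpan q k.toNat := by
  simp only [hg]
  rcases lt_or_ge k 0 with hk | hk
  · simp only [qBinom_of_neg hk]
    exact Submodule.zero_mem _
  have h : (fun n => qBinom q (a ⬝ᵥ n + b) k) =
      (qFact q k.toNat)⁻¹ • fun n => ∏ j ∈ range k.toNat, qNum q (a ⬝ᵥ n + (b - j)) := by
    ext n
    simp only [qBinom_of_nonneg hk, qFall, Pi.smul_apply, smul_eq_mul, add_sub_assoc]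
    ring
  rw [h]
  exact Submodule.smul_mem _ _ (prod_qNum_mem hq0 ha (fun _ _ => rfl) _)

variable (r) in
def planeBox (j : Fin r) (M : ℕ) : Finset (Fin r → ℤ) :=
  Icc (Function.update (-(M : Fin r → ℤ)) j 0) (Function.update (M : Fin r → ℤ) j 0)

lemma card_planeBox (j : Fin r) (M : ℕ) : #(planeBox r j M) = (2 * M + 1) ^ (r - 1) := by
  rw [planeBox, Pi.card_Icc]
  simp_rw [Function.apply_update₂ (fun _ a b => #(Icc a b))]
  rw [prod_update_of_mem (mem_univ j)]
  simp only [Pi.neg_apply, Pi.natCast_apply, Int.card_Icc, prod_const, card_sdiff_of_subset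
    (subset_univ _), card_univ, Fintype.card_fin, card_singleton]
  rw [show (0 + 1 - 0 : ℤ).toNat = 1 by rfl, one_mul]
  congr 1
  omega

lemma mem_planeBox {j : Fin r} {M : ℕ} {e : Fin r → ℤ} (hj : e j = 0) (he : ∀ i, |e i| ≤ M) :
    e ∈ planeBox r j M := by
  simp only [planeBox, mem_Icc, Pi.le_def, Function.update_apply]
  refine ⟨fun i => ?_, fun i => ?_⟩ <;> split_ifs with h <;> simp_all [abs_le]

lemma finrank_map_laurentSpan_le_of_plane (hq0 : q ≠ 0) {l : Fin r → ℤ} {j : Fin r}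
    (hlj : l j = 1) (hl : ∀ i, |l i| ≤ 1) {d : ℤ} {S : Set (Fin r → ℤ)}
    (hS : ∀ n ∈ S, l ⬝ᵥ n = d) (ψ : (Fin r → ℤ) → F) (N : ℕ) :
    Module.finrank F ((laurentSpan q N).map (restrictTo F S ∘ₗ LinearMap.mulRight F ψ)) ≤
      (4 * N + 1) ^ (r - 1) := by
  set T := restrictTo F S ∘ₗ LinearMap.mulRight F ψ
  -- on the plane, `e` and `e - e j • l` give proportional monomials, and the latter has `j`-th
  -- coordinate `0`
  have hT : ∀ e, T (laurentMono q e) = q ^ (e j * d) • T (laurentMono q (e - e j • l)) := by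
    intro e
    ext n
    by_cases hn : n ∈ S
    · simp only [T, LinearMap.comp_apply, restrictTo_apply, LinearMap.mulRight_apply,
        Pi.smul_apply, Set.indicator_of_mem hn, Pi.mul_apply, laurentMono, smul_eq_mul,
        sub_dotProduct, smul_dotProduct, hS n hn, smul_eq_mul]
      rw [← mul_assoc, ← zpow_add₀ hq0, add_sub_cancel]
    · simp [T, hn]
  have hle : (laurentSpan q N).map T ≤
      Submodule.span F (Set.range fun e : planeBox r j (2 * N) => T (laurentMono q e)) := by
    rw [laurentSpan, Submodule.map_span, Submodule.span_le]
    rintro _ ⟨_, ⟨⟨e, he⟩, rfl⟩, rfl⟩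
    rw [hT]
    refine Submodule.smul_mem _ _ (Submodule.subset_span ⟨⟨e - e j • l, mem_planeBox ?_ ?_⟩, rfl⟩)
    · simp [hlj]
    · intro i
      have h1 := mem_laurentBox.mp he i
      have h2 := mem_laurentBox.mp he j
      have h3 := hl i
      simp only [Pi.sub_apply, Pi.smul_apply, smul_eq_mul]
      calc |e i - e j * l i| ≤ |e i| + |e j| * |l i| := by
            rw [← abs_mul]; exact abs_sub _ _
        _ ≤ N + N * 1 := by gcongr
        _ = ((2 * N : ℕ) : ℤ) := by push_cast; ring
  have : FiniteDimensional F (Submodule.span F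
      (Set.range fun e : planeBox r j (2 * N) => T (laurentMono q e))) :=
    FiniteDimensional.span_of_finite F (Set.finite_range _)
  refine (Submodule.finrank_mono hle).trans ((finrank_range_le_card _).trans ?_)
  simp [card_planeBox, show 2 * (2 * N) = 4 * N by ring]

lemma laurentMono_natCast_mem {m : ℕ} {α : Fin r → ℕ} (hα : ∑ i, α i ≤ m) :
    laurentMono q (fun i => (α i : ℤ)) ∈ laurentSpan q m :=
  laurentMono_mem fun i => by
    rw [abs_of_nonneg (by positivity)]
    exact_mod_cast (single_le_sum (fun j _ => Nat.zero_le (α j)) (mem_univ i)).trans hα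

end Laurent

section Holonomic

variable {k : Type} [Field k] {r : ℕ}

lemma finiteDimensional_FmZ {V : Type} [AddCommGroup V] [Module (RatFunc k) V] (m : ℕ)
    (f : (Fin r → ℤ) → V) : FiniteDimensional (RatFunc k) (FmZ k m f) := by
  refine FiniteDimensional.span_of_finite _ (Set.Finite.subset
    (((Set.finite_Iic fun _ => m).prod (Set.finite_Iic fun _ => m)).image
      fun p => shiftZ k p.1 p.2 f) ?_)
  rintro _ ⟨α, β, hαβ, rfl⟩
  refine ⟨(α, β), ⟨fun i => ?_, fun i => ?_⟩, rfl⟩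
  · exact (single_le_sum (fun j _ => Nat.zero_le (α j)) (mem_univ i)).trans
      (by omega : ∑ j, α j ≤ m)
  · exact (single_le_sum (fun j _ => Nat.zero_le (β j)) (mem_univ i)).trans
      (by omega : ∑ j, β j ≤ m)

lemma finrank_map_restrictTo_FmZ_le {m : ℕ} {f ψ : (Fin r → ℤ) → RatFunc k}
    {S : Set (Fin r → ℤ)} {U : Submodule (RatFunc k) ((Fin r → ℤ) → RatFunc k)}
    [FiniteDimensional (RatFunc k) U]
    (h : ∀ α β : Fin r → ℕ, ∑ i, α i + ∑ i, β i ≤ m →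
      ∃ P ∈ U, Set.EqOn (shiftZ k α β f) (P * ψ) S) :
    Module.finrank (RatFunc k) ((FmZ k m f).map (restrictTo _ S)) ≤
      Module.finrank (RatFunc k) (U.map (restrictTo _ S ∘ₗ LinearMap.mulRight _ ψ)) := by
  refine Submodule.finrank_mono ?_
  rw [FmZ, Submodule.map_span, Submodule.span_le]
  rintro _ ⟨_, ⟨α, β, hαβ, rfl⟩, rfl⟩
  obtain ⟨P, hP, hEq⟩ := h α β hαβ
  refine ⟨P, hP, funext fun n => ?_⟩
  by_cases hn : n ∈ S
  · simp [hn, hEq hn]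
  · simp [hn]

end Holonomic

lemma RatFunc.not_isOfFinOrder_X {K : Type*} [Field K] :
    ¬IsOfFinOrder (RatFunc.X : RatFunc K) := by
  rw [isOfFinOrder_iff_pow_eq_one]
  rintro ⟨n, hn, h⟩
  have := congrArg RatFunc.intDegree h
  rw [← RatFunc.algebraMap_X, ← map_pow, RatFunc.intDegree_polynomial,
    Polynomial.natDegree_X_pow, RatFunc.intDegree_one] at this
  omega

section Kfun

lemma Kfun_eq_qBinom (p : Fin 3 → ℤ) : Kfun p = qBinom RatFunc.X (p 2 + p 0) (p 1) := by
  unfold Kfun qBinom qFall qFact qNum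
  split_ifs
  · rw [prod_div_distrib]
  · rfl

lemma shiftZ_Kfun_apply (α β : Fin 3 → ℕ) (n : Fin 3 → ℤ) :
    shiftZ ℚ α β Kfun n = laurentMono RatFunc.X (fun i => (α i : ℤ)) n *
      qBinom RatFunc.X (n 2 + n 0 + (β 2 + β 0 : ℕ)) (n 1 + β 1) := by
  rw [shiftZ, Kfun_eq_qBinom, smul_eq_mul]
  congr 2
  push_cast
  ring

lemma dotProduct_one_zero_one (n : Fin 3 → ℤ) : ![1, 0, 1] ⬝ᵥ n = n 2 + n 0 := by
  simp [dotProduct, Fin.sum_univ_three, add_comm]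

lemma dotProduct_zero_one_zero (n : Fin 3 → ℤ) : ![0, 1, 0] ⬝ᵥ n = n 1 := by
  simp [dotProduct, Fin.sum_univ_three]

lemma dotProduct_one_neg_one_one (n : Fin 3 → ℤ) : ![1, -1, 1] ⬝ᵥ n = n 2 + n 0 - n 1 := by
  simp [dotProduct, Fin.sum_univ_three, sub_eq_add_neg, add_comm, add_left_comm, add_assoc]

lemma laurentMono_mul_qBinom_mem {m : ℕ} {α β : Fin 3 → ℕ}
    (hαβ : ∑ i, α i + ∑ i, β i ≤ m) {E : ℤ} (hE : E ≤ 2 * m) :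
    laurentMono (RatFunc.X : RatFunc ℚ) (fun i => (α i : ℤ)) *
        (fun n => qBinom RatFunc.X (n 2 + n 0 + (β 2 + β 0 : ℕ)) E) ∈
      laurentSpan RatFunc.X (3 * m) := by
  refine laurentSpan_mono ?_ (mul_mem_laurentSpan RatFunc.X_ne_zero
    (laurentMono_natCast_mem (m := m) (by omega))
    (qBinom_mem RatFunc.X_ne_zero (a := ![1, 0, 1]) (b := (β 2 + β 0 : ℕ)) (by decide)
      (fun n => by rw [dotProduct_one_zero_one]) E))
  omega

lemma laurentMono_mul_qBinomRatioNum_mem {m : ℕ} {α β : Fin 3 → ℕ}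
    (hαβ : ∑ i, α i + ∑ i, β i ≤ m) :
    laurentMono (RatFunc.X : RatFunc ℚ) (fun i => (α i : ℤ)) *
        (fun n => qBinomRatioNum RatFunc.X m (β 2 + β 0) (β 1) (n 2 + n 0) (n 1)) ∈
      laurentSpan RatFunc.X (3 * m) := by
  have hX := RatFunc.X_ne_zero (K := ℚ)
  have h₁ := prod_qNum_mem hX (a := ![1, -1, 1]) (by decide)
    (b := fun j => ((β 2 + β 0 : ℕ) : ℤ) - j)
    (g := fun n j => n 2 + n 0 + ((β 2 + β 0 : ℕ) : ℤ) - n 1 - j)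
    (fun n j => by rw [dotProduct_one_neg_one_one]; ring) (β 1)
  have h₂ := prod_qNum_mem hX (a := ![1, 0, 1]) (by decide) (b := fun i => 1 + (i : ℤ))
    (g := fun n i => n 2 + n 0 + 1 + i)
    (fun n j => by rw [dotProduct_one_zero_one]; ring) (β 2 + β 0)
  have h₃ := prod_qNum_mem hX (a := ![0, 1, 0]) (by decide) (b := fun j => 1 + β 1 + (j : ℤ))
    (g := fun n j => n 1 + 1 + (β 1 : ℤ) + j)
    (fun n j => by rw [dotProduct_zero_one_zero]; ring) (m - β 1)
  have h₄ := prod_qNum_mem hX (a := ![1, -1, 1]) (by decide)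
    (b := fun i => 1 + ((β 2 + β 0 : ℕ) : ℤ) + i)
    (g := fun n i => n 2 + n 0 - n 1 + 1 + ((β 2 + β 0 : ℕ) : ℤ) + i)
    (fun n j => by rw [dotProduct_one_neg_one_one]; ring) (m - (β 2 + β 0))
  refine laurentSpan_mono ?_ (mul_mem_laurentSpan hX (laurentMono_natCast_mem (m := m) ?_)
    (mul_mem_laurentSpan hX (mul_mem_laurentSpan hX (mul_mem_laurentSpan hX h₁ h₂) h₃) h₄))
  all_goals simp only [Fin.sum_univ_three] at hαβ ⊢; omega

def negRegion (m : ℕ) : Set (Fin 3 → ℤ) := {n | n 1 < -m}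

def rowRegion (c : ℤ) : Set (Fin 3 → ℤ) := {n | n 1 = c}

def diagRegion (m : ℕ) (d : ℤ) : Set (Fin 3 → ℤ) := {n | (m : ℤ) < n 1 ∧ n 2 + n 0 - n 1 = d}

def genericRegion (m : ℕ) : Set (Fin 3 → ℤ) :=
  {n | 0 ≤ n 1 ∧ n 2 + n 0 - n 1 ∉ Set.Icc (-(m : ℤ)) (-1)}

lemma regions_union_eq_univ (m : ℕ) :
    negRegion m ∪ genericRegion m ∪ (⋃ c ∈ Icc (-(m : ℤ)) m, rowRegion c) ∪
      (⋃ d ∈ Icc (-(m : ℤ)) (-1), diagRegion m d) = Set.univ := by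
  refine Set.eq_univ_of_forall fun n => ?_
  simp only [Set.mem_union, Set.mem_iUnion, mem_Icc, Set.mem_Icc, negRegion, rowRegion,
    diagRegion, genericRegion, Set.mem_ofPred_eq, exists_prop]
  by_cases h₁ : n 1 < -m
  · exact Or.inl (Or.inl (Or.inl h₁))
  by_cases h₂ : n 1 ≤ m
  · exact Or.inl (Or.inr ⟨n 1, ⟨by omega, h₂⟩, rfl⟩)
  by_cases h₃ : -(m : ℤ) ≤ n 2 + n 0 - n 1 ∧ n 2 + n 0 - n 1 ≤ -1
  · exact Or.inr ⟨_, h₃, by omega, rfl⟩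
  · exact Or.inl (Or.inl (Or.inr ⟨by omega, h₃⟩))

lemma finrank_le_sum_finrank_map_restrictTo_regions {R V : Type*} [Field R] [AddCommGroup V]
    [Module R V] (W : Submodule R ((Fin 3 → ℤ) → V)) [FiniteDimensional R W] (m : ℕ) :
    Module.finrank R W ≤
      Module.finrank R (W.map (restrictTo R (negRegion m))) +
        Module.finrank R (W.map (restrictTo R (genericRegion m))) +
        ∑ c ∈ Icc (-(m : ℤ)) m, Module.finrank R (W.map (restrictTo R (rowRegion c))) +
        ∑ d ∈ Icc (-(m : ℤ)) (-1), Module.finrank R (W.map (restrictTo R (diagRegion m d))) := by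
  have h₁ := finrank_map_restrictTo_union_le W
    (negRegion m ∪ genericRegion m ∪ ⋃ c ∈ Icc (-(m : ℤ)) m, rowRegion c)
    (⋃ d ∈ Icc (-(m : ℤ)) (-1), diagRegion m d)
  have h₂ := finrank_map_restrictTo_union_le W (negRegion m ∪ genericRegion m)
    (⋃ c ∈ Icc (-(m : ℤ)) m, rowRegion c)
  have h₃ := finrank_map_restrictTo_union_le W (negRegion m) (genericRegion m)
  have h₄ := finrank_map_restrictTo_biUnion_le W (Icc (-(m : ℤ)) m) rowRegion
  have h₅ := finrank_map_restrictTo_biUnion_le W (Icc (-(m : ℤ)) (-1)) (diagRegion m)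
  rw [regions_union_eq_univ, restrictTo_univ, Submodule.map_id] at h₁
  omega

lemma finrank_map_restrictTo_negRegion (m : ℕ) :
    Module.finrank (RatFunc ℚ) ((FmZ ℚ m Kfun).map (restrictTo _ (negRegion m))) = 0 := by
  refine Nat.eq_zero_of_le_zero ((finrank_map_restrictTo_FmZ_le (U := ⊥) (ψ := 0)
    fun α β hαβ => ⟨0, Submodule.zero_mem _, fun n (hn : n 1 < -m) => ?_⟩).trans (by simp))
  simp only [Fin.sum_univ_three] at hαβ
  simp [shiftZ_Kfun_apply, qBinom_of_neg (show n 1 + (β 1 : ℤ) < 0 by omega)]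

lemma finrank_map_restrictTo_genericRegion_le (m : ℕ) :
    Module.finrank (RatFunc ℚ) ((FmZ ℚ m Kfun).map (restrictTo _ (genericRegion m))) ≤
      (6 * m + 1) ^ 3 := by
  refine (finrank_map_restrictTo_FmZ_le (U := laurentSpan RatFunc.X (3 * m))
    (ψ := fun n => qBinom RatFunc.X (n 2 + n 0) (n 1) /
      qBinomRatioDen RatFunc.X m (n 2 + n 0) (n 1))
    fun α β hαβ => ⟨_, laurentMono_mul_qBinomRatioNum_mem hαβ, fun n hn => ?_⟩).trans
    ((Submodule.finrank_map_le _ _).trans ?_)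
  · obtain ⟨hn₁, hn₂⟩ := hn
    simp only [Fin.sum_univ_three] at hαβ
    have hden := qBinomRatioDen_ne_zero (RatFunc.X_ne_zero (K := ℚ)) RatFunc.not_isOfFinOrder_X
      (m := m)
      (x := n 2 + n 0) hn₁ (fun i hi => by simp only [Set.mem_Icc] at hn₂; omega)
    have key := qBinom_add_add_mul_ratioDen (RatFunc.X_ne_zero (K := ℚ))
      RatFunc.not_isOfFinOrder_X
      (n 2 + n 0) (n 1) (show β 2 + β 0 ≤ m by omega) (show β 1 ≤ m by omega)
    rw [← eq_div_iff hden] at key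
    rw [shiftZ_Kfun_apply, key, Pi.mul_apply, Pi.mul_apply]
    ring
  · simpa [show 2 * (3 * m) = 6 * m by ring] using
      finrank_laurentSpan_le (r := 3) RatFunc.X (3 * m)

lemma finrank_map_restrictTo_rowRegion_le {m : ℕ} {c : ℤ} (hc : c ≤ m) :
    Module.finrank (RatFunc ℚ) ((FmZ ℚ m Kfun).map (restrictTo _ (rowRegion c))) ≤
      (12 * m + 1) ^ 2 := by
  refine (finrank_map_restrictTo_FmZ_le (U := laurentSpan RatFunc.X (3 * m)) (ψ := 1)
    fun α β hαβ => ⟨_, laurentMono_mul_qBinom_mem hαβ (E := c + β 1) ?_,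
      fun n hn => by simp [shiftZ_Kfun_apply, show n 1 = c from hn]⟩).trans ?_
  · simp only [Fin.sum_univ_three] at hαβ
    omega
  · simpa [show 4 * (3 * m) = 12 * m by ring] using
      finrank_map_laurentSpan_le_of_plane (RatFunc.X_ne_zero (K := ℚ)) (l := ![0, 1, 0]) (j := 1)
        rfl (by decide) (S := rowRegion c)
        (fun n (hn : n 1 = c) => (dotProduct_zero_one_zero n).trans hn) 1 (3 * m)

lemma finrank_map_restrictTo_diagRegion_le {m : ℕ} {d : ℤ} (hd : |d| ≤ m) :
    Module.finrank (RatFunc ℚ) ((FmZ ℚ m Kfun).map (restrictTo _ (diagRegion m d))) ≤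
      (12 * m + 1) ^ 2 := by
  obtain ⟨hd₁, hd₂⟩ := abs_le.mp hd
  refine (finrank_map_restrictTo_FmZ_le (U := laurentSpan RatFunc.X (3 * m)) (ψ := 1)
    fun α β hαβ => ⟨_, laurentMono_mul_qBinom_mem hαβ (E := d + (β 2 + β 0 : ℕ) - β 1) ?_,
      fun n hn => ?_⟩).trans ?_
  · simp only [Fin.sum_univ_three] at hαβ
    omega
  · obtain ⟨hn₁, hn₂⟩ := hn
    rw [shiftZ_Kfun_apply, qBinom_symm RatFunc.X_ne_zero RatFunc.not_isOfFinOrder_X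
      (by omega), Pi.mul_apply, Pi.one_apply, mul_one, Pi.mul_apply]
    congr 2
    omega
  · simpa [show 4 * (3 * m) = 12 * m by ring] using
      finrank_map_laurentSpan_le_of_plane (RatFunc.X_ne_zero (K := ℚ)) (l := ![1, -1, 1])
        (j := 2) rfl (by decide) (d := d) (S := diagRegion m d)
        (fun n (hn : n ∈ diagRegion m d) => (dotProduct_one_neg_one_one n).trans hn.2) 1 (3 * m)

lemma finrank_FmZ_Kfun_le (m : ℕ) :
    Module.finrank (RatFunc ℚ) (FmZ ℚ m Kfun) ≤
      (6 * m + 1) ^ 3 + (2 * m + 1) * (12 * m + 1) ^ 2 + m * (12 * m + 1) ^ 2 := by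
  have := finiteDimensional_FmZ (k := ℚ) m Kfun
  refine (finrank_le_sum_finrank_map_restrictTo_regions _ m).trans ?_
  rw [finrank_map_restrictTo_negRegion, zero_add]
  gcongr
  · exact finrank_map_restrictTo_genericRegion_le m
  · refine (sum_le_card_nsmul _ _ _ fun c hc =>
      finrank_map_restrictTo_rowRegion_le (mem_Icc.mp hc).2).trans_eq ?_
    rw [Int.card_Icc, smul_eq_mul]
    congr 1
    omega
  · refine (sum_le_card_nsmul _ _ _ fun d hd =>
      finrank_map_restrictTo_diagRegion_le (abs_le.mpr ?_)).trans_eq ?_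
    · have := mem_Icc.mp hd
      constructor <;> omega
    · rw [Int.card_Icc, smul_eq_mul]
      congr 1
      omega

end Kfun

/-- Lemma 6.2(c): the function `K(n,k,ℓ)` is q-holonomic in the three variables. -/
theorem qholonomic_K : IsQHolonomicZ ℚ Kfun := by
  refine ⟨fun m => finiteDimensional_FmZ m Kfun, 648, fun m => (finrank_FmZ_Kfun_le m).trans ?_⟩
  calc (6 * m + 1) ^ 3 + (2 * m + 1) * (12 * m + 1) ^ 2 + m * (12 * m + 1) ^ 2
      ≤ (6 * (m + 1)) ^ 3 + 2 * (m + 1) * (12 * (m + 1)) ^ 2 + (m + 1) * (12 * (m + 1)) ^ 2 := by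
        gcongr <;> omega
    _ = 648 * (m + 1) ^ 3 := by ring
end
end

section
/- Integrally 𝒯_r-finite functions are q-holonomic (Theorem 7.2(a)): let f : ℤ^r → V and suppose that for each i ∈ {1,…,r} there exist k_i ∈ ℕ and polynomials a_{i,0},…,a_{i,k_i−1} ∈ R[u_1,…,u_r] such that for all n = (n_1,…,n_r) ∈ ℤ^r one has f(n + k_i e_i) + Σ_{j=0}^{k_i−1} a_{i,j}(q^{n_1},…,q^{n_r}) f(n + j e_i) = 0, where e_i denotes the i-th standard basis vector of ℤ^r (i.e., f is integrally 𝒯_r-finite: in each variable it satisfies a recurrence, monic in the highest shift, whose coefficients are polynomials in q^{n_1},…,q^{n_r}). Then f is q-holonomic. -/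
open scoped BigOperators

noncomputable section

/-! Using the recurrence in direction `i`, a shift `M^α L^β f` with `β i ≥ kᵢ` is a
`k(q)`-combination of shifts `M^(α+γ) L^β' f` with `|β'| < |β|` and `|γ| ≤ D`, where `D` bounds
the total degrees of the coefficients `a_{i,j}`. Iterating, every generator of `F_m f` lies in
the span of the `M^α L^β f` with `β < k` componentwise and `|α| ≤ (D + 1) m`; there are at most
`((D + 1) m + 1)^r ∏ kᵢ` of these. -/

namespace QHolonomic

open Finset MvPolynomial Submodule

theorem zpow_sum₀ {ι G₀ : Type*} [CommGroupWithZero G₀] {x : G₀} (hx : x ≠ 0) (s : Finset ι)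
    (e : ι → ℤ) : x ^ (∑ i ∈ s, e i) = ∏ i ∈ s, x ^ e i := by
  induction s using Finset.cons_induction with
  | empty => simp
  | cons a s h ih => rw [sum_cons, prod_cons, zpow_add₀ hx, ih]

variable {k : Type} [Field k] {V : Type} [AddCommGroup V] [Module (RatFunc k) V] {r : ℕ}

theorem eval_X_zpow (n : Fin r → ℤ) (p : MvPolynomial (Fin r) (RatFunc k)) :
    eval (fun t => (RatFunc.X : RatFunc k) ^ n t) p =
      ∑ γ ∈ p.support, coeff γ p * RatFunc.X ^ (∑ t, (γ t : ℤ) * n t) := by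
  rw [eval_eq']
  refine sum_congr rfl fun γ _ => ?_
  rw [zpow_sum₀ RatFunc.X_ne_zero]
  simp only [← zpow_natCast, ← zpow_mul, mul_comm]

variable (k) in
def SatisfiesQRecurrence (f : (Fin r → ℤ) → V) (i : Fin r) (K : ℕ)
    (a : ℕ → MvPolynomial (Fin r) (RatFunc k)) : Prop :=
  ∀ n : Fin r → ℤ, f (n + Pi.single i (K : ℤ)) +
    ∑ j ∈ range K, eval (fun t => (RatFunc.X : RatFunc k) ^ n t) (a j) •
      f (n + Pi.single i (j : ℤ)) = 0

theorem shiftZ_add_single_eq_sum {f : (Fin r → ℤ) → V} {i : Fin r} {K : ℕ}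
    {a : ℕ → MvPolynomial (Fin r) (RatFunc k)} (hf : SatisfiesQRecurrence k f i K a)
    (α β : Fin r → ℕ) :
    shiftZ k α (β + Pi.single i K) f = ∑ j ∈ range K, ∑ γ ∈ (a j).support,
      (-(coeff γ (a j) * RatFunc.X ^ (∑ t, (γ t : ℤ) * β t))) •
        shiftZ k (α + ⇑γ) (β + Pi.single i j) f := by
  funext n
  set m : Fin r → ℤ := fun t => n t + β t
  have hshift : ∀ (α' : Fin r → ℕ) (c : ℕ), shiftZ k α' (β + Pi.single i c) f n =
      (RatFunc.X : RatFunc k) ^ (∑ t, (α' t : ℤ) * n t) • f (m + Pi.single i (c : ℤ)) := by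
    intro α' c
    simp only [shiftZ, m]
    congr 2
    funext t
    simp only [Pi.add_apply, Pi.single_apply]
    split_ifs <;> push_cast <;> ring
  rw [hshift, eq_neg_of_add_eq_zero_left (hf m), smul_neg, smul_sum, ← sum_neg_distrib,
    Finset.sum_apply]
  refine sum_congr rfl fun j _ => ?_
  rw [Finset.sum_apply, eval_X_zpow, sum_smul, smul_sum, ← sum_neg_distrib]
  refine sum_congr rfl fun γ _ => ?_
  rw [Pi.smul_apply, hshift, smul_smul, smul_smul, ← neg_smul]
  congr 1
  have hm : ∑ t, (γ t : ℤ) * m t = ∑ t, (γ t : ℤ) * β t + ∑ t, (γ t : ℤ) * n t := by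
    simp only [m, mul_add, sum_add_distrib]; ring
  have hαγ : ∑ t, ((α + γ) t : ℤ) * n t = ∑ t, (α t : ℤ) * n t + ∑ t, (γ t : ℤ) * n t := by
    simp only [Pi.add_apply, Nat.cast_add, add_mul, sum_add_distrib]
  rw [hm, hαγ, zpow_add₀ RatFunc.X_ne_zero, zpow_add₀ RatFunc.X_ne_zero]
  ring

variable (k) in
def reducedShifts (f : (Fin r → ℤ) → V) (K : Fin r → ℕ) (N : ℕ) : Set ((Fin r → ℤ) → V) :=
  {g | ∃ α β : Fin r → ℕ, ∑ i, α i ≤ N ∧ (∀ i, β i < K i) ∧ g = shiftZ k α β f}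

theorem reducedShifts_mono (f : (Fin r → ℤ) → V) (K : Fin r → ℕ) {N N' : ℕ} (h : N ≤ N') :
    reducedShifts k f K N ⊆ reducedShifts k f K N' := by
  rintro g ⟨α, β, hα, hβ, rfl⟩
  exact ⟨α, β, hα.trans h, hβ, rfl⟩

theorem shiftZ_mem_span_reducedShifts {f : (Fin r → ℤ) → V} {K : Fin r → ℕ}
    {a : Fin r → ℕ → MvPolynomial (Fin r) (RatFunc k)}
    (hf : ∀ i, SatisfiesQRecurrence k f i (K i) (a i)) {D : ℕ}
    (hD : ∀ i, ∀ j < K i, (a i j).totalDegree ≤ D) (α β : Fin r → ℕ) :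
    shiftZ k α β f ∈ span (RatFunc k) (reducedShifts k f K (∑ t, α t + D * ∑ t, β t)) := by
  induction h : ∑ t, β t using Nat.strong_induction_on generalizing α β with
  | _ s ih =>
  subst h
  by_cases hβ : ∀ i, β i < K i
  · exact subset_span ⟨α, β, le_self_add, hβ, rfl⟩
  obtain ⟨i, hi⟩ : ∃ i, K i ≤ β i := by simpa only [not_forall, not_lt] using hβ
  set β₀ := β - Pi.single i (K i)
  have hβ₀ : β₀ + Pi.single i (K i) = β := by
    funext t
    simp only [β₀, Pi.add_apply, Pi.sub_apply, Pi.single_apply]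
    split_ifs with ht
    · subst ht; omega
    · omega
  rw [← hβ₀, shiftZ_add_single_eq_sum (hf i)]
  refine sum_mem fun j hj => sum_mem fun γ hγ => smul_mem _ _ ?_
  have hsum : ∑ t, (β₀ + Pi.single i j : Fin r → ℕ) t + 1 ≤ ∑ t, β t := by
    rw [← hβ₀]
    simp only [Pi.add_apply, sum_add_distrib, sum_pi_single', mem_univ, if_true]
    have := mem_range.mp hj
    omega
  have hγ : ∑ t, γ t ≤ D := by
    rw [← Finsupp.sum_fintype γ (fun _ e => e) fun _ => rfl]
    exact (le_totalDegree hγ).trans (hD i j (mem_range.mp hj))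
  refine span_mono (reducedShifts_mono f K ?_) (ih _ (by omega) _ _ rfl)
  have := Nat.mul_le_mul_left D hsum
  rw [hβ₀]
  simp only [Pi.add_apply, sum_add_distrib, mul_add, mul_one] at this ⊢
  omega

theorem reducedShifts_subset_range (f : (Fin r → ℤ) → V) (K : Fin r → ℕ) (N : ℕ) :
    reducedShifts k f K N ⊆ Set.range fun p : (Fin r → Fin (N + 1)) × ((i : Fin r) → Fin (K i)) =>
      shiftZ k (fun t => p.1 t) (fun t => p.2 t) f := by
  rintro g ⟨α, β, hα, hβ, rfl⟩
  have hαN (i : Fin r) : α i < N + 1 :=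
    Nat.lt_succ_of_le ((single_le_sum (fun t _ => Nat.zero_le (α t)) (mem_univ i)).trans hα)
  exact ⟨(fun i => ⟨α i, hαN i⟩, fun i => ⟨β i, hβ i⟩), rfl⟩

instance finiteDimensional_span_reducedShifts (f : (Fin r → ℤ) → V) (K : Fin r → ℕ) (N : ℕ) :
    FiniteDimensional (RatFunc k) (span (RatFunc k) (reducedShifts k f K N)) :=
  FiniteDimensional.span_of_finite _
    ((Set.finite_range _).subset (reducedShifts_subset_range f K N))

theorem finrank_span_reducedShifts_le (f : (Fin r → ℤ) → V) (K : Fin r → ℕ) (N : ℕ) :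
    Module.finrank (RatFunc k) (span (RatFunc k) (reducedShifts k f K N)) ≤
      (N + 1) ^ r * ∏ i, K i := by
  have := FiniteDimensional.span_of_finite (RatFunc k)
    (Set.finite_range fun p : (Fin r → Fin (N + 1)) × ((i : Fin r) → Fin (K i)) =>
      shiftZ k (fun t => p.1 t) (fun t => p.2 t) f)
  refine (Submodule.finrank_mono (span_mono (reducedShifts_subset_range f K N))).trans ?_
  refine (finrank_range_le_card _).trans_eq ?_
  simp only [Fintype.card_prod, Fintype.card_pi, Fintype.card_fin, prod_const, card_univ]

theorem isQHolonomicZ_of_le_span_reducedShifts {f : (Fin r → ℤ) → V} (K : Fin r → ℕ) (c : ℕ)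
    (h : ∀ m, FmZ k m f ≤ span (RatFunc k) (reducedShifts k f K (c * m))) :
    IsQHolonomicZ k f := by
  refine ⟨fun m => Submodule.finiteDimensional_of_le (h m), (c + 1) ^ r * ∏ i, K i, fun m => ?_⟩
  calc Module.finrank (RatFunc k) (FmZ k m f)
      ≤ (c * m + 1) ^ r * ∏ i, K i :=
        (Submodule.finrank_mono (h m)).trans (finrank_span_reducedShifts_le f K _)
    _ ≤ ((c + 1) * (m + 1)) ^ r * ∏ i, K i := by gcongr; nlinarith
    _ = (c + 1) ^ r * (∏ i, K i) * (m + 1) ^ r := by rw [mul_pow]; ring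

end QHolonomic

theorem qholonomic_of_integrally_finite_general (k : Type) [Field k] {V : Type}
    [AddCommGroup V] [Module (RatFunc k) V] {r : ℕ}
    (f : (Fin r → ℤ) → V)
    (hrec : ∀ i : Fin r, ∃ (ki : ℕ) (a : ℕ → MvPolynomial (Fin r) (RatFunc k)),
      ∀ n : Fin r → ℤ,
        f (fun t => n t + if t = i then (ki : ℤ) else 0) +
          ∑ j ∈ Finset.range ki,
            (MvPolynomial.eval (fun t => (RatFunc.X : RatFunc k) ^ (n t)) (a j)) •
              f (fun t => n t + if t = i then (j : ℤ) else 0) = 0) :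
    IsQHolonomicZ k f := by
  choose K a hrec using hrec
  have hsingle (n : Fin r → ℤ) (i : Fin r) (c : ℤ) :
      (fun t => n t + if t = i then c else 0) = n + Pi.single i c := by
    funext t
    simp only [Pi.add_apply, Pi.single_apply]
  have hf (i : Fin r) : QHolonomic.SatisfiesQRecurrence k f i (K i) (a i) := fun n => by
    simpa only [hsingle] using hrec i n
  obtain ⟨D, hD⟩ : ∃ D, ∀ i, ∀ j < K i, (a i j).totalDegree ≤ D :=
    ⟨Finset.univ.sup fun i => (Finset.range (K i)).sup fun j => (a i j).totalDegree,
      fun i j hj => (Finset.le_sup (f := fun j => (a i j).totalDegree)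
        (Finset.mem_range.mpr hj)).trans (Finset.le_sup
          (f := fun i => (Finset.range (K i)).sup fun j => (a i j).totalDegree)
          (Finset.mem_univ i))⟩
  refine QHolonomic.isQHolonomicZ_of_le_span_reducedShifts K (D + 1)
    fun m => Submodule.span_le.mpr ?_
  rintro g ⟨α, β, hm, rfl⟩
  refine Submodule.span_mono (QHolonomic.reducedShifts_mono f K ?_)
    (QHolonomic.shiftZ_mem_span_reducedShifts hf hD α β)
  calc ∑ t, α t + D * ∑ t, β t ≤ (D + 1) * (∑ t, α t + ∑ t, β t) := by ring_nf; omega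
    _ ≤ (D + 1) * m := Nat.mul_le_mul_left _ hm

/-- Theorem 7.2(a): if `f : ℤ^r → V` is integrally `𝒯_r`-finite, i.e. for each
`i ∈ {1,…,r}` there are `kᵢ ∈ ℕ` and polynomials `a_{i,0}, …, a_{i,kᵢ−1}` in
`r` variables over `k(q)` such that
`f(n + kᵢ eᵢ) + Σ_{j<kᵢ} a_{i,j}(q^{n_1},…,q^{n_r}) • f(n + j eᵢ) = 0` for all `n`,
then `f` is q-holonomic. -/
theorem qholonomic_of_integrally_finite (k : Type) [Field k] [CharZero k] {V : Type}
    [AddCommGroup V] [Module (RatFunc k) V] {r : ℕ} (hr : 1 ≤ r)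
    (f : (Fin r → ℤ) → V)
    (hrec : ∀ i : Fin r, ∃ (ki : ℕ) (a : ℕ → MvPolynomial (Fin r) (RatFunc k)),
      ∀ n : Fin r → ℤ,
        f (fun t => n t + if t = i then (ki : ℤ) else 0) +
          ∑ j ∈ Finset.range ki,
            (MvPolynomial.eval (fun t => (RatFunc.X : RatFunc k) ^ (n t)) (a j)) •
              f (fun t => n t + if t = i then (j : ℤ) else 0) = 0) :
    IsQHolonomicZ k f :=
  qholonomic_of_integrally_finite_general k f hrec
end
end

section
/- q-holonomic functions satisfy the elimination property (Theorem 7.2(b)): let f : ℤ^r → V be q-holonomic. Then for every pair of subsets I, J ⊆ {1,…,r} with |I| + |J| = r + 1, there exists a finitely supported family of coefficients c : ℕ^r × ℕ^r → R, not identically zero, with c(α,β) = 0 unless α is supported on I and β is supported on J, such that Σ_{(α,β)} c(α,β) q^{α·n} f(n+β) = 0 for all n ∈ ℤ^r. (Equivalently, f is strongly 𝒯_r-finite: for every subset 𝓛 of {M_1,…,M_r, L_1,…,L_r} with r+1 elements, f is annihilated by a nonzero element of the subalgebra of the quantum Weyl algebra generated by 𝓛; after normal ordering, such elements are exactly the sums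 Σ c(α,β) M^α L^β with α supported on I and β supported on J.) -/
open scoped BigOperators

noncomputable section

/-!
The `(d + 1) ^ (|I| + |J|) = (d + 1) ^ (r + 1)` functions `M^α L^β f`, with `α` supported on `I`,
`β` supported on `J` and all entries at most `d`, lie in `F_{(r+1)d} f`, whose dimension is at most
`C ((r + 1) d + 1) ^ r`. For `d = C (r + 1) ^ r` this is smaller than `(d + 1) ^ (r + 1)`, so these
functions are linearly dependent, and a nontrivial relation among them is the required annihilator.
-/

open Finset Module Submodule

theorem Submodule.exists_linearCombination_eq_zero_of_finrank_lt {K M ι : Type*} [Field K]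
    [AddCommGroup M] [Module K M] (W : Submodule K M) [FiniteDimensional K W]
    {s : Finset ι} {v : ι → M} (hv : ∀ i ∈ s, v i ∈ W) (hs : finrank K W < #s) :
    ∃ c ∈ Finsupp.supported K K (s : Set ι), Finsupp.linearCombination K v c = 0 ∧ c ≠ 0 := by
  refine linearDepOn_iff'.mp fun hli => hs.not_ge ?_
  calc #s = finrank K (span K (Set.range fun i : (s : Set ι) => v i)) := by
        rw [finrank_span_eq_card hli]; simp
    _ ≤ finrank K W :=
        finrank_mono (span_le.mpr (by rintro _ ⟨i, rfl⟩; exact hv i i.2))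

section SupportedBox

variable {ι : Type*} [Fintype ι] [DecidableEq ι]

def supportedBox (I : Finset ι) (d : ℕ) : Finset (ι → ℕ) :=
  Fintype.piFinset fun i => if i ∈ I then range (d + 1) else {0}

variable {I : Finset ι} {d : ℕ} {α : ι → ℕ}

theorem card_supportedBox : #(supportedBox I d) = (d + 1) ^ #I := by
  simp [supportedBox, apply_ite Finset.card, prod_ite_mem]

theorem eq_zero_of_mem_supportedBox (hα : α ∈ supportedBox I d) {i : ι} (hi : i ∉ I) :
    α i = 0 := by
  simpa [hi] using Fintype.mem_piFinset.mp hα i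

theorem sum_le_of_mem_supportedBox (hα : α ∈ supportedBox I d) : ∑ i, α i ≤ #I * d := by
  rw [← sum_subset (subset_univ I) fun i _ hi => eq_zero_of_mem_supportedBox hα hi]
  refine (sum_le_sum fun i hi => ?_).trans_eq (by rw [sum_const, smul_eq_mul])
  simpa [hi, Nat.lt_succ_iff] using Fintype.mem_piFinset.mp hα i

end SupportedBox

theorem mul_pow_lt_succ_pow_succ {C r d : ℕ} (hd : d = C * (r + 1) ^ r) :
    C * ((r + 1) * d + 1) ^ r < (d + 1) ^ (r + 1) :=
  calc C * ((r + 1) * d + 1) ^ r ≤ C * ((r + 1) * (d + 1)) ^ r := by gcongr; nlinarith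
    _ = d * (d + 1) ^ r := by rw [hd, mul_pow]; ring
    _ < (d + 1) ^ (r + 1) := by rw [pow_succ']; gcongr; exact d.lt_succ_self

section Shift

variable {k : Type} [Field k] {V : Type} [AddCommGroup V] [Module (RatFunc k) V] {r : ℕ}
  (f : (Fin r → ℤ) → V)

theorem shiftZ_mem_FmZ {m : ℕ} {α β : Fin r → ℕ} (h : ∑ i, α i + ∑ i, β i ≤ m) :
    shiftZ k α β f ∈ FmZ k m f :=
  subset_span ⟨α, β, h, rfl⟩

theorem linearCombination_shiftZ_apply (c : ((Fin r → ℕ) × (Fin r → ℕ)) →₀ RatFunc k)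
    (n : Fin r → ℤ) :
    Finsupp.linearCombination (RatFunc k) (fun p => shiftZ k p.1 p.2 f) c n =
      c.sum fun p a => (a * (RatFunc.X : RatFunc k) ^ (∑ i, (p.1 i : ℤ) * n i)) •
        f (fun i => n i + (p.2 i : ℤ)) := by
  simp only [Finsupp.linearCombination_apply, Finsupp.sum, Finset.sum_apply, Pi.smul_apply, shiftZ,
    mul_smul]

end Shift

theorem qholonomic_elimination_general (k : Type) [Field k] {V : Type}
    [AddCommGroup V] [Module (RatFunc k) V] {r : ℕ}
    (f : (Fin r → ℤ) → V) (hf : IsQHolonomicZ k f) :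
    ∀ I J : Finset (Fin r), I.card + J.card = r + 1 →
      ∃ c : ((Fin r → ℕ) × (Fin r → ℕ)) →₀ RatFunc k,
        c ≠ 0 ∧
        (∀ p ∈ c.support, (∀ i, i ∉ I → p.1 i = 0) ∧ (∀ i, i ∉ J → p.2 i = 0)) ∧
        ∀ n : Fin r → ℤ,
          (c.sum fun p a =>
            (a * (RatFunc.X : RatFunc k) ^ (∑ i, (p.1 i : ℤ) * n i)) •
              f (fun i => n i + (p.2 i : ℤ))) = 0 := by
  intro I J hIJ
  obtain ⟨hfin, C, hC⟩ := hf
  set d := C * (r + 1) ^ r with hd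
  have hmem : ∀ p ∈ supportedBox I d ×ˢ supportedBox J d,
      shiftZ k p.1 p.2 f ∈ FmZ k ((r + 1) * d) f := fun p hp => by
    obtain ⟨hα, hβ⟩ := mem_product.mp hp
    refine shiftZ_mem_FmZ f ?_
    grw [sum_le_of_mem_supportedBox hα, sum_le_of_mem_supportedBox hβ, ← add_mul, hIJ]
  have hcard : finrank (RatFunc k) (FmZ k ((r + 1) * d) f) <
      #(supportedBox I d ×ˢ supportedBox J d) := by
    rw [card_product, card_supportedBox, card_supportedBox, ← pow_add, hIJ]
    exact (hC _).trans_lt (mul_pow_lt_succ_pow_succ hd)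
  have := hfin ((r + 1) * d)
  obtain ⟨c, hcs, hc, hc0⟩ := exists_linearCombination_eq_zero_of_finrank_lt _ hmem hcard
  refine ⟨c, hc0, fun p hp => ?_, fun n => ?_⟩
  · obtain ⟨hα, hβ⟩ := mem_product.mp (hcs hp)
    exact ⟨fun i => eq_zero_of_mem_supportedBox hα, fun i => eq_zero_of_mem_supportedBox hβ⟩
  · rw [← linearCombination_shiftZ_apply, hc, Pi.zero_apply]

/-- Theorem 7.2(b): a q-holonomic function is strongly `𝒯_r`-finite. For every pair of
subsets `I, J ⊆ {1,…,r}` with `|I| + |J| = r + 1` there is a nonzero finitely supported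
family of coefficients `c(α,β) ∈ k(q)`, with `α` supported on `I` and `β` supported on
`J`, such that `Σ_{(α,β)} c(α,β) q^{α·n} f(n+β) = 0` for all `n ∈ ℤ^r`. -/
theorem qholonomic_elimination (k : Type) [Field k] [CharZero k] {V : Type}
    [AddCommGroup V] [Module (RatFunc k) V] {r : ℕ} (hr : 1 ≤ r)
    (f : (Fin r → ℤ) → V) (hf : IsQHolonomicZ k f) :
    ∀ I J : Finset (Fin r), I.card + J.card = r + 1 →
      ∃ c : ((Fin r → ℕ) × (Fin r → ℕ)) →₀ RatFunc k,
        c ≠ 0 ∧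
        (∀ p ∈ c.support, (∀ i, i ∉ I → p.1 i = 0) ∧ (∀ i, i ∉ J → p.2 i = 0)) ∧
        ∀ n : Fin r → ℤ,
          (c.sum fun p a =>
            (a * (RatFunc.X : RatFunc k) ^ (∑ i, (p.1 i : ℤ) * n i)) •
              f (fun i => n i + (p.2 i : ℤ))) = 0 :=
  qholonomic_elimination_general k f hf
end
end

section
/- The function n ↦ q^{n³} is not q-holonomic (Example 2.3(b)): there do not exist d ∈ ℕ and polynomials a_0, …, a_d ∈ ℚ(q)[u], not all zero, such that Σ_{j=0}^{d} a_j(q^n) · q^{(n+j)³} = 0 for all n ∈ ℕ. -/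
/-!
Let `v` be the valuation at infinity of `ℚ(q)`, so `v q = exp 1`. For a nonzero polynomial `p`,
`v (p(q^n))` is `exp (n · deg p + O(1))`, only linear in `n`, while `(n + j)³` grows by at least
`3n²` from one `j` to the next. Hence, for large `n`, the term with the largest `j` such that
`a_j ≠ 0` strictly dominates all the others in valuation, so the sum cannot vanish.
-/

open Polynomial WithZero Filter Finset

lemma eventually_mul_add_add_pow_three_lt (a b a' b' : ℤ) {i j : ℕ} (hij : i < j) :
    ∀ᶠ n : ℕ in atTop, n * a + b + ((n : ℤ) + i) ^ 3 < n * a' + b' + ((n : ℤ) + j) ^ 3 := by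
  filter_upwards [eventually_ge_atTop ((a - a').natAbs + (b - b').natAbs + 1)] with n hn
  have hn' : |a - a'| + |b - b'| + 1 ≤ (n : ℤ) := by
    rw [Int.abs_eq_natAbs, Int.abs_eq_natAbs]; exact_mod_cast hn
  have hcube : ((n : ℤ) + i + 1) ^ 3 ≤ ((n : ℤ) + j) ^ 3 :=
    pow_le_pow_left₀ (by positivity) (by omega) 3
  nlinarith [le_abs_self (a - a'), le_abs_self (b - b'), abs_nonneg (a - a'),
    abs_nonneg (b - b'), sq_nonneg ((n : ℤ) + i)]

namespace Valuation

variable {K : Type*} [Field K] (v : Valuation K ℤᵐ⁰)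

lemma exists_map_coeff_le (p : K[X]) : ∃ C : ℤ, ∀ k, v (p.coeff k) ≤ exp C := by
  obtain ⟨C, hC⟩ := (p.support.image fun k => log (v (p.coeff k))).exists_le
  refine ⟨C, fun k => ?_⟩
  by_cases hk : p.coeff k = 0
  · simp [hk]
  · have hv : v (p.coeff k) ≠ 0 := v.ne_zero_iff.mpr hk
    rw [← exp_log hv, exp_le_exp]
    exact hC _ (mem_image_of_mem _ (mem_support_iff.mpr hk))

variable {v} {t : K}

lemma map_pow_eq_exp (ht : v t = exp 1) (m : ℕ) : v (t ^ m) = exp (m : ℤ) := by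
  rw [map_pow, ht, ← exp_nsmul, nsmul_one]

lemma map_coeff_mul_pow_le (ht : v t = exp 1) {p : K[X]} {C : ℤ}
    (hC : ∀ k, v (p.coeff k) ≤ exp C) (n k : ℕ) :
    v (p.coeff k * (t ^ n) ^ k) ≤ exp (C + n * k) := by
  rw [map_mul, ← pow_mul, map_pow_eq_exp ht, exp_add]
  push_cast
  exact mul_le_mul_left (hC k) _

lemma map_eval_pow_le (ht : v t = exp 1) {p : K[X]} {C : ℤ}
    (hC : ∀ k, v (p.coeff k) ≤ exp C) (n : ℕ) :
    v (p.eval (t ^ n)) ≤ exp (n * p.natDegree + C) := by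
  rw [eval_eq_sum_range]
  refine v.map_sum_le fun k hk => (map_coeff_mul_pow_le ht hC n k).trans (exp_le_exp.mpr ?_)
  have : k ≤ p.natDegree := Nat.lt_succ_iff.mp (mem_range.mp hk)
  nlinarith

lemma map_eval_pow_mul_pow_le (ht : v t = exp 1) {p : K[X]} {C : ℤ}
    (hC : ∀ k, v (p.coeff k) ≤ exp C) (n m : ℕ) :
    v (p.eval (t ^ n) * t ^ m) ≤ exp (n * p.natDegree + C + m) := by
  rw [map_mul, map_pow_eq_exp ht, exp_add]
  exact mul_le_mul_left (map_eval_pow_le ht hC n) _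

lemma eventually_map_eval_pow_eq (ht : v t = exp 1) {p : K[X]} (hp : p ≠ 0) :
    ∀ᶠ n : ℕ in atTop, v (p.eval (t ^ n)) = exp (n * p.natDegree + log (v p.leadingCoeff)) := by
  obtain ⟨C, hC⟩ := v.exists_map_coeff_le p
  have hlc : v p.leadingCoeff ≠ 0 := v.ne_zero_iff.mpr (leadingCoeff_ne_zero.mpr hp)
  filter_upwards [eventually_gt_atTop (C - log (v p.leadingCoeff)).toNat] with n hn
  have hn' : C - log (v p.leadingCoeff) < n := by omega
  have hlead : v (p.coeff p.natDegree * (t ^ n) ^ p.natDegree)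
      = exp (n * p.natDegree + log (v p.leadingCoeff)) := by
    rw [map_mul, ← pow_mul, map_pow_eq_exp ht, coeff_natDegree, ← exp_log hlc, ← exp_add,
      log_exp]
    push_cast; ring_nf
  rw [eval_eq_sum_range, v.map_sum_eq_of_lt (self_mem_range_succ _), hlead]
  intro k hk
  have hk : k < p.natDegree := by
    simp only [Finset.mem_sdiff, Finset.mem_range, Finset.mem_singleton] at hk; omega
  refine (map_coeff_mul_pow_le ht hC n k).trans_lt ?_
  rw [hlead, exp_lt_exp]
  nlinarith

theorem exists_sum_eval_pow_mul_pow_cube_ne_zero (ht : v t = exp 1) {d : ℕ} {a : ℕ → K[X]}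
    (ha : ∃ j ≤ d, a j ≠ 0) :
    ∃ n : ℕ, ∑ j ∈ range (d + 1), (a j).eval (t ^ n) * t ^ ((n + j) ^ 3) ≠ 0 := by
  classical
  obtain ⟨j₀, hj₀d, hj₀⟩ := ha
  set J := Nat.findGreatest (fun j => a j ≠ 0) d
  have hJ : a J ≠ 0 := Nat.findGreatest_spec (P := fun j => a j ≠ 0) hj₀d hj₀
  have hJd : J < d + 1 := Nat.lt_succ_of_le (Nat.findGreatest_le d)
  choose C hC using fun i => v.exists_map_coeff_le (a i)
  set L := log (v (a J).leadingCoeff)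
  have hdominates : ∀ᶠ n : ℕ in atTop, ∀ i ∈ range J,
      n * (a i).natDegree + C i + ((n : ℤ) + i) ^ 3 < n * (a J).natDegree + L + ((n : ℤ) + J) ^ 3 :=
    (eventually_all_finset _).mpr fun i hi =>
      eventually_mul_add_add_pow_three_lt _ _ _ _ (mem_range.mp hi)
  obtain ⟨n, hnJ, hni⟩ := ((eventually_map_eval_pow_eq ht hJ).and hdominates).exists
  have hterm : v ((a J).eval (t ^ n) * t ^ ((n + J) ^ 3))
      = exp (n * (a J).natDegree + L + ((n : ℤ) + J) ^ 3) := by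
    rw [map_mul, hnJ, map_pow_eq_exp ht, ← exp_add]
    push_cast; rfl
  refine ⟨n, fun hsum => ?_⟩
  have hval := v.map_sum_eq_of_lt (f := fun j => (a j).eval (t ^ n) * t ^ ((n + j) ^ 3))
    (mem_range.mpr hJd) ?_
  · rw [hsum, map_zero, hterm] at hval
    exact exp_ne_zero hval.symm
  intro i hi
  simp only [Finset.mem_sdiff, Finset.mem_range, Finset.mem_singleton] at hi
  obtain ⟨hid, hiJ⟩ := hi
  rw [hterm]
  rcases lt_or_gt_of_ne hiJ with hlt | hgt
  · refine (map_eval_pow_mul_pow_le ht (hC i) n _).trans_lt ?_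
    push_cast
    exact exp_lt_exp.mpr (hni i (mem_range.mpr hlt))
  · rw [not_not.mp (Nat.findGreatest_is_greatest hgt (by omega)), eval_zero, zero_mul, map_zero]
    exact exp_pos

end Valuation

/-- Example 2.3(b): the function `n ↦ q^{n³}` is not q-holonomic: there are no
`d ∈ ℕ` and polynomials `a_0, …, a_d ∈ ℚ(q)[u]`, not all zero, with
`Σ_{j=0}^d a_j(q^n) q^{(n+j)³} = 0` for all `n ∈ ℕ`. -/
theorem not_qholonomic_q_pow_cube :
    ¬ ∃ (d : ℕ) (a : ℕ → Polynomial (RatFunc ℚ)),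
        (∃ j ≤ d, a j ≠ 0) ∧
        ∀ n : ℕ, ∑ j ∈ Finset.range (d + 1),
          (a j).eval ((RatFunc.X : RatFunc ℚ) ^ n) *
            (RatFunc.X : RatFunc ℚ) ^ ((n + j) ^ 3) = 0 := by
  classical
  rintro ⟨d, a, ha, hrec⟩
  obtain ⟨n, hn⟩ := (RatFunc.inftyValuation ℚ).exists_sum_eval_pow_mul_pow_cube_ne_zero
    (RatFunc.inftyValuation.X ℚ) ha
  exact hn (hrec n)
end

section
/- Failure of the elimination property for 1/(q^n + q^k + 1) (Remark 7.3): let f : ℤ² → ℚ(q) be defined by f(n,k) = 1/(q^n + q^k + 1). Then there do not exist polynomials c_{i,j} ∈ ℚ(q)[u], indexed by (i,j) ∈ ℕ² with all but finitely many equal to zero and not all zero, such that Σ_{(i,j)} c_{i,j}(q^n) / (q^{n+j} + q^{k+i} + 1) = 0 for all (n,k) ∈ ℤ². In particular, f does not satisfy the elimination property for the set {M_n, L_k, L_n}, and hence f is not q-holonomic, even though f is 𝒯_2-finite (it satisfies a nontrivial recurrence in each of the two variables separately). -/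
open scoped BigOperators

noncomputable section

/-! Fix `n ≥ 1`. As a function of `x = q^K`, the summand `1/(q^(n+j) + q^(K+i) + 1)` is the
partial fraction `q^(-i)/(x - r_ij)` with pole `r_ij = -(q^(n+j) + 1)/q^i`, and these poles are
pairwise distinct because `q^a + q^b` with `a > b` determines `a` and `b`. Partial fractions with
distinct poles are linearly independent (Lagrange interpolation) and `x = q^K` takes infinitely
many values, so `c_ij(q^n) = 0` for all `n ≥ 1`, i.e. `c_ij = 0`.

If `f` were q-holonomic, the `t^3` functions `M_n^a L_n^j L_k^i f` with `a, i, j < t` would lie in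
`F_(3t) f`, whose dimension is `O(t^2)`; a linear relation `Σ g_aij M_n^a L_n^j L_k^i f = 0` among
them is a relation of the excluded form with `c_ij(u) = Σ_a g_aij u^a`. -/

open Polynomial Lagrange Finset

theorem Lagrange.eq_zero_of_infinite_sum_div_sub_eq_zero {F ι : Type*} [Field F] [DecidableEq ι]
    {s : Finset ι} {v : ι → F} (hvs : Set.InjOn v s) {a : ι → F}
    (h : {x | ∑ i ∈ s, a i / (x - v i) = 0}.Infinite) {i : ι} (hi : i ∈ s) : a i = 0 := by
  set r : ι → F := fun j => a j / nodalWeight s v j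
  have hr : interpolate s v r = 0 := by
    refine eq_zero_of_infinite_isRoot _ ((h.sdiff (s.finite_toSet.image v)).mono ?_)
    rintro x ⟨hx, hxv⟩
    have hx' : ∀ j ∈ s, x ≠ v j := fun j hj hxj => hxv ⟨j, hj, hxj.symm⟩
    have hsum : ∑ j ∈ s, nodalWeight s v j * (x - v j)⁻¹ * r j = 0 := by
      refine (sum_congr rfl fun j hj => ?_).trans hx
      have := nodalWeight_ne_zero hvs hj
      simp only [r]
      field_simp
    show eval x _ = 0
    rw [eval_interpolate_not_at_node r hx', hsum, mul_zero]
  have hri : r i = 0 := by rw [← eval_interpolate_at_node r hvs hi, hr, eval_zero]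
  exact (div_eq_zero_iff.mp hri).resolve_right (nodalWeight_ne_zero hvs hi)

namespace RatFunc

variable {k : Type*} [Field k]

theorem X_pow_injective : Function.Injective fun n : ℕ => (X : RatFunc k) ^ n := fun m n h => by
  simpa [← algebraMap_X, ← map_pow, intDegree_polynomial] using congrArg intDegree h

theorem eq_and_eq_of_X_pow_add_X_pow_eq {a b c d : ℕ} (hba : b < a) (hdc : d < c)
    (h : (X : RatFunc k) ^ a + X ^ b = X ^ c + X ^ d) : a = c ∧ b = d := by
  have hpoly : (Polynomial.X ^ a + Polynomial.X ^ b : k[X]) =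
      Polynomial.X ^ c + Polynomial.X ^ d :=
    algebraMap_injective k (by simp [algebraMap_X, h])
  have hdeg {m n : ℕ} (hnm : n < m) :
      (Polynomial.X ^ m + Polynomial.X ^ n : k[X]).natDegree = m := by
    rw [natDegree_add_eq_left_of_natDegree_lt] <;> simp [hnm]
  obtain rfl : a = c := by rw [← hdeg hba, hpoly, hdeg hdc]
  exact ⟨rfl, X_pow_injective (add_left_cancel h)⟩

theorem eq_zero_of_sum_div_X_pow_add_X_pow_add_one {S : Finset (ℕ × ℕ)} {n : ℕ} (hn : 0 < n)
    {a : ℕ × ℕ → RatFunc k}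
    (h : ∀ K : ℕ, ∑ p ∈ S, a p / (X ^ (n + p.2) + X ^ (K + p.1) + 1) = 0)
    {p : ℕ × ℕ} (hp : p ∈ S) : a p = 0 := by
  set v : ℕ × ℕ → RatFunc k := fun p => -(X ^ (n + p.2) + 1) / X ^ p.1
  have hden (K : ℕ) (p : ℕ × ℕ) :
      X ^ (n + p.2) + X ^ (K + p.1) + 1 = X ^ p.1 * (X ^ K - v p) := by
    simp only [v]
    field_simp [X_ne_zero]
    ring
  have hv : Set.InjOn v S := by
    intro p _ p' _ hpp'
    have hpow : (X : RatFunc k) ^ (n + p.2 + p'.1) + X ^ p'.1 =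
        X ^ (n + p'.2 + p.1) + X ^ p.1 := by
      simp only [v] at hpp'
      field_simp [X_ne_zero] at hpp'
      linear_combination -hpp'
    obtain ⟨h1, h2⟩ := eq_and_eq_of_X_pow_add_X_pow_eq (by omega) (by omega) hpow
    ext <;> omega
  have key := eq_zero_of_infinite_sum_div_sub_eq_zero hv (a := fun p => a p / X ^ p.1) ?_ hp
  · simpa [X_ne_zero] using key
  refine Set.infinite_of_injective_forall_mem X_pow_injective fun K => ?_
  show ∑ p ∈ S, a p / X ^ p.1 / (X ^ K - v p) = 0
  simpa only [div_div, ← hden] using h K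

theorem eq_zero_of_sum_eval_div_X_zpow_add_X_zpow_add_one {S : Finset (ℕ × ℕ)}
    {c : ℕ × ℕ → (RatFunc k)[X]}
    (h : ∀ n K : ℤ,
      ∑ p ∈ S, (c p).eval ((X : RatFunc k) ^ n) / (X ^ (n + p.2) + X ^ (K + p.1) + 1) = 0)
    {p : ℕ × ℕ} (hp : p ∈ S) : c p = 0 := by
  have hroot (N : ℕ) : (c p).eval ((X : RatFunc k) ^ (N + 1)) = 0 := by
    refine eq_zero_of_sum_div_X_pow_add_X_pow_add_one N.succ_pos
      (a := fun p => (c p).eval (X ^ (N + 1))) (fun K => ?_) hp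
    simpa only [← Nat.cast_add, zpow_natCast] using h (N + 1 : ℕ) K
  exact eq_zero_of_infinite_isRoot _ (Set.infinite_of_injective_forall_mem
    (X_pow_injective.comp (add_left_injective 1)) hroot)

end RatFunc

theorem IsQHolonomicZ.exists_nontrivial_relation {k : Type} [Field k] {V : Type} [AddCommGroup V]
    [Module (RatFunc k) V] {r : ℕ} {f : (Fin r → ℤ) → V} (hf : IsQHolonomicZ k f) :
    ∃ C : ℕ, ∀ (m : ℕ) {ι : Type*} (s : Finset ι) (α β : ι → Fin r → ℕ),
      (∀ i ∈ s, ∑ j, α i j + ∑ j, β i j ≤ m) → C * (m + 1) ^ r < #s →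
      ∃ g : ι → RatFunc k, ∑ i ∈ s, g i • shiftZ k (α i) (β i) f = 0 ∧ ∃ i ∈ s, g i ≠ 0 := by
  obtain ⟨hfin, C, hC⟩ := hf
  refine ⟨C, fun m ι s α β hs hcard => not_linearIndepOn_finset_iff.mp fun hli => ?_⟩
  let w : s → FmZ k m f := fun i => ⟨_, Submodule.subset_span ⟨α i, β i, hs i i.2, rfl⟩⟩
  have hw : LinearIndependent (RatFunc k) w := LinearIndependent.of_comp (FmZ k m f).subtype hli
  have := hw.fintype_card_le_finrank
  rw [Fintype.card_coe] at this
  exact (hcard.trans_le this).not_ge (hC m)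

theorem not_isQHolonomicZ_inv_X_zpow_add_X_zpow_add_one {k : Type} [Field k] :
    ¬ IsQHolonomicZ k (fun p : Fin 2 → ℤ =>
      ((RatFunc.X : RatFunc k) ^ (p 0) + RatFunc.X ^ (p 1) + 1)⁻¹) := by
  intro hf
  obtain ⟨B, hB⟩ := hf.exists_nontrivial_relation
  set t := 16 * B + 1 with ht
  have hbound : B * (3 * t + 1) ^ 2 < #(range t ×ˢ (range t ×ˢ range t)) := by
    rw [card_product, card_product, card_range]
    calc B * (3 * t + 1) ^ 2 ≤ B * (16 * t ^ 2) := Nat.mul_le_mul_left B (by nlinarith)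
      _ = 16 * B * t ^ 2 := by ring
      _ < t * t ^ 2 := Nat.mul_lt_mul_of_pos_right (by omega) (by positivity)
      _ = t * (t * t) := by ring
  obtain ⟨g, hg, ⟨a₀, p₀⟩, hi₀, hg₀⟩ := hB (3 * t) (range t ×ˢ (range t ×ˢ range t))
    (fun i => ![i.1, 0]) (fun i => ![i.2.2, i.2.1])
    (fun i hi => by
      simp only [mem_product, mem_range, Fin.sum_univ_two, Fin.isValue, Matrix.cons_val_zero,
        Matrix.cons_val_one, Matrix.cons_val_fin_one, add_zero] at hi ⊢
      omega) hbound
  rw [mem_product] at hi₀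
  have hc := RatFunc.eq_zero_of_sum_eval_div_X_zpow_add_X_zpow_add_one
    (c := fun p => ∑ a ∈ range t, C (g (a, p)) * X ^ a) ?_ hi₀.2
  · apply hg₀
    simpa [finsetSum_coeff, coeff_C_mul_X_pow, hi₀.1] using congrArg (coeff · a₀) hc
  intro n K
  rw [sum_product_right] at hg
  refine Eq.trans ?_ (congrFun hg ![n, K])
  simp only [eval_finsetSum, eval_mul, eval_C, eval_pow, eval_X, sum_div, Finset.sum_apply,
    Pi.smul_apply, shiftZ, Fin.sum_univ_two, Matrix.cons_val_zero, Matrix.cons_val_one,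
    Matrix.cons_val_fin_one, CharP.cast_eq_zero, zero_mul, add_zero, smul_eq_mul]
  refine sum_congr rfl fun p _ => sum_congr rfl fun a _ => ?_
  rw [← zpow_natCast, ← zpow_mul, mul_comm n, div_eq_mul_inv, mul_assoc]

/-- Remark 7.3: the function `f(n,k) = 1/(q^n + q^k + 1)` does not satisfy the
elimination property for `{M_n, L_k, L_n}`: there is no nonzero finitely supported
family of polynomials `c_{i,j} ∈ ℚ(q)[u]` with
`Σ_{(i,j)} c_{i,j}(q^n) / (q^{n+j} + q^{k+i} + 1) = 0` for all `(n,k) ∈ ℤ²`.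
In particular, `f` is not q-holonomic. -/
theorem koutschan_example :
    (¬ ∃ c : (ℕ × ℕ) →₀ Polynomial (RatFunc ℚ),
        c ≠ 0 ∧
        ∀ n K : ℤ,
          (c.sum fun p poly =>
            poly.eval ((RatFunc.X : RatFunc ℚ) ^ n) /
              ((RatFunc.X : RatFunc ℚ) ^ (n + (p.2 : ℤ)) +
                (RatFunc.X : RatFunc ℚ) ^ (K + (p.1 : ℤ)) + 1)) = 0) ∧
    ¬ IsQHolonomicZ ℚ (fun p : Fin 2 → ℤ =>
        ((RatFunc.X : RatFunc ℚ) ^ (p 0) + (RatFunc.X : RatFunc ℚ) ^ (p 1) + 1)⁻¹) := by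
  refine ⟨fun ⟨c, hc, h⟩ => ?_, not_isQHolonomicZ_inv_X_zpow_add_X_zpow_add_one⟩
  obtain ⟨p, hp⟩ := Finsupp.support_nonempty_iff.mpr hc
  exact Finsupp.mem_support_iff.mp hp
    (RatFunc.eq_zero_of_sum_eval_div_X_zpow_add_X_zpow_add_one h hp)
end
end
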